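/- arXiv:1708.09811 — 7 statements merged into one kernel-verified Lean document; each statement's English description precedes it below -/
import Mathlib

section
/- Exponential weights achieves, for every horizon T ≥ 1 and every expert i ∈ {1,…,M}, irrespective of the values of the signal and of the experts' predictions, the regret bound L_T − L_{i,T} ≤ (1/η) · log(1/π_i). -/
/-!
The potential `W t = ∑ i, π i * exp (-η L_{i,t})` is the normaliser of the exponential weights.
Exp-concavity applied to the normalised weights of round `t + 1` bounds the learner's loss in that
round by `-(1/η) log (W (t+1) / W t)`, so the learner's cumulative loss telescopes to at most
`-(1/η) log W T` (as `W 0 = 1`). Keeping only the term of expert `i` gives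
`W T ≥ π i * exp (-η L_{i,T})`, which is the regret bound.
-/

open Finset

section

variable {E Y : Type*}

def cumLoss (ℓ : E → Y → ℝ) (x : ℕ → E) (y : ℕ → Y) (T : ℕ) : ℝ :=
  ∑ t ∈ Icc 1 T, ℓ (x t) (y t)

theorem cumLoss_succ (ℓ : E → Y → ℝ) (x : ℕ → E) (y : ℕ → Y) (T : ℕ) :
    cumLoss ℓ x y (T + 1) = cumLoss ℓ x y T + ℓ (x (T + 1)) (y (T + 1)) :=
  sum_Icc_succ_top (Nat.le_add_left 1 T) _

theorem cumLoss_le_of_le_sub {ℓ : E → Y → ℝ} {x : ℕ → E} {y : ℕ → Y} {Φ : ℕ → ℝ} {c : ℝ}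
    (h : ∀ t, ℓ (x (t + 1)) (y (t + 1)) ≤ c * (Φ (t + 1) - Φ t)) (T : ℕ) :
    cumLoss ℓ x y T ≤ c * (Φ T - Φ 0) := by
  induction T with
  | zero => simp [cumLoss]
  | succ T ih => rw [cumLoss_succ]; linarith [h T]

variable {ι : Type*} [Fintype ι]

noncomputable def expWeightsPotential (ℓ : E → Y → ℝ) (η : ℝ) (π : ι → ℝ) (xe : ι → ℕ → E)
    (y : ℕ → Y) (t : ℕ) : ℝ :=
  ∑ i, π i * Real.exp (-η * cumLoss ℓ (xe i) y t)

variable {ℓ : E → Y → ℝ} {η : ℝ} {π : ι → ℝ} {xe : ι → ℕ → E} {y : ℕ → Y}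

theorem expWeightsPotential_zero (hπ : ∑ i, π i = 1) : expWeightsPotential ℓ η π xe y 0 = 1 := by
  simp [expWeightsPotential, cumLoss, hπ]

theorem expWeightsPotential_pos [Nonempty ι] (hπ : ∀ i, 0 < π i) (t : ℕ) :
    0 < expWeightsPotential ℓ η π xe y t :=
  sum_pos (fun i _ => mul_pos (hπ i) (Real.exp_pos _)) univ_nonempty

theorem expWeightsPotential_succ (t : ℕ) :
    expWeightsPotential ℓ η π xe y (t + 1) =
      ∑ i, π i * Real.exp (-η * cumLoss ℓ (xe i) y t) *
        Real.exp (-η * ℓ (xe i (t + 1)) (y (t + 1))) := by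
  simp only [expWeightsPotential, cumLoss_succ, mul_add, Real.exp_add, mul_assoc]

theorem log_prior_sub_le_log_expWeightsPotential (hπ : ∀ i, 0 < π i) (i : ι) (t : ℕ) :
    Real.log (π i) - η * cumLoss ℓ (xe i) y t ≤ Real.log (expWeightsPotential ℓ η π xe y t) := by
  have hterm : 0 < π i * Real.exp (-η * cumLoss ℓ (xe i) y t) := mul_pos (hπ i) (Real.exp_pos _)
  calc Real.log (π i) - η * cumLoss ℓ (xe i) y t
      = Real.log (π i * Real.exp (-η * cumLoss ℓ (xe i) y t)) := by
        rw [Real.log_mul (hπ i).ne' (Real.exp_pos _).ne', Real.log_exp]; ring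
    _ ≤ Real.log (expWeightsPotential ℓ η π xe y t) :=
        Real.log_le_log hterm <|
          single_le_sum (f := fun j => π j * Real.exp (-η * cumLoss ℓ (xe j) y t))
            (fun j _ => (mul_pos (hπ j) (Real.exp_pos _)).le) (mem_univ i)

theorem regret_le_of_cumLoss_le_neg_log_expWeightsPotential (hη : 0 < η) (hπ : ∀ i, 0 < π i)
    {xl : ℕ → E} {T : ℕ}
    (hxl : cumLoss ℓ xl y T ≤ -(1/η) * Real.log (expWeightsPotential ℓ η π xe y T)) (i : ι) :
    cumLoss ℓ xl y T - cumLoss ℓ (xe i) y T ≤ (1/η) * Real.log (1 / π i) := by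
  have hexpert := mul_le_mul_of_nonneg_left
    (log_prior_sub_le_log_expWeightsPotential (ℓ := ℓ) (η := η) (xe := xe) (y := y) hπ i T)
    (one_div_pos.2 hη).le
  have hcancel : 1/η * (η * cumLoss ℓ (xe i) y T) = cumLoss ℓ (xe i) y T := by field_simp
  rw [one_div (π i), Real.log_inv]
  linarith

section

variable [AddCommGroup E] [Module ℝ E]

def IsExpConcave (X : Set E) (ℓ : E → Y → ℝ) (η : ℝ) : Prop :=
  ∀ (yy : Y) (N : ℕ), 1 ≤ N → ∀ xs : Fin N → E, (∀ i, xs i ∈ X) →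
    ∀ vv : Fin N → ℝ, (∀ i, 0 ≤ vv i) → (∑ i, vv i) = 1 →
      ℓ (∑ i, vv i • xs i) yy ≤ -(1/η) * Real.log (∑ i, vv i * Real.exp (-η * ℓ (xs i) yy))

theorem IsExpConcave.loss_normalized_sum_le {X : Set E} {ℓ : E → Y → ℝ} {η : ℝ}
    (hexp : IsExpConcave X ℓ η) {N : ℕ} {x : Fin N → E} (hx : ∀ j, x j ∈ X)
    {a : Fin N → ℝ} (ha : ∀ j, 0 ≤ a j) (hA : 0 < ∑ j, a j) (yy : Y) :
    ℓ ((∑ j, a j)⁻¹ • ∑ j, a j • x j) yy ≤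
      -(1/η) * Real.log ((∑ j, a j * Real.exp (-η * ℓ (x j) yy)) / ∑ j, a j) := by
  have hN : 1 ≤ N := Nat.pos_of_ne_zero (by rintro rfl; simp at hA)
  have hv := hexp yy N hN x hx (fun j => a j / ∑ k, a k) (fun j => div_nonneg (ha j) hA.le)
    (by rw [← sum_div, div_self hA.ne'])
  simp only [div_mul_eq_mul_div, ← sum_div] at hv
  simpa only [smul_sum, smul_smul, div_eq_inv_mul] using hv

theorem IsExpConcave.loss_le_log_expWeightsPotential_div {X : Set E} {M : ℕ} [Nonempty (Fin M)]
    {π : Fin M → ℝ} {xe : Fin M → ℕ → E} (hexp : IsExpConcave X ℓ η) (hπ : ∀ i, 0 < π i)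
    (hxe : ∀ i t, xe i t ∈ X) (t : ℕ) :
    ℓ ((expWeightsPotential ℓ η π xe y t)⁻¹ •
        ∑ i, (π i * Real.exp (-η * cumLoss ℓ (xe i) y t)) • xe i (t + 1)) (y (t + 1)) ≤
      -(1/η) * Real.log
        (expWeightsPotential ℓ η π xe y (t + 1) / expWeightsPotential ℓ η π xe y t) := by
  rw [expWeightsPotential_succ]
  exact hexp.loss_normalized_sum_le (fun i => hxe i (t + 1))
    (fun i => (mul_pos (hπ i) (Real.exp_pos _)).le) (expWeightsPotential_pos hπ t) (y (t + 1))

theorem IsExpConcave.cumLoss_le_neg_log_expWeightsPotential {X : Set E} {M : ℕ}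
    [Nonempty (Fin M)] {π : Fin M → ℝ} {xe : Fin M → ℕ → E} (hexp : IsExpConcave X ℓ η)
    (hπ : ∀ i, 0 < π i) (hπsum : ∑ i, π i = 1) (hxe : ∀ i t, xe i t ∈ X) {xl : ℕ → E}
    (hxl : ∀ t, xl (t + 1) = (expWeightsPotential ℓ η π xe y t)⁻¹ •
      ∑ i, (π i * Real.exp (-η * cumLoss ℓ (xe i) y t)) • xe i (t + 1)) (T : ℕ) :
    cumLoss ℓ xl y T ≤ -(1/η) * Real.log (expWeightsPotential ℓ η π xe y T) := by
  have hW := expWeightsPotential_pos (ℓ := ℓ) (η := η) (xe := xe) (y := y) hπ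
  have hstep (t : ℕ) : ℓ (xl (t + 1)) (y (t + 1)) ≤
      -(1/η) * (Real.log (expWeightsPotential ℓ η π xe y (t + 1)) -
        Real.log (expWeightsPotential ℓ η π xe y t)) := by
    rw [← Real.log_div (hW _).ne' (hW _).ne', hxl]
    exact hexp.loss_le_log_expWeightsPotential_div hπ hxe t
  simpa only [expWeightsPotential_zero hπsum, Real.log_one, sub_zero] using
    cumLoss_le_of_le_sub (Φ := fun t => Real.log (expWeightsPotential ℓ η π xe y t)) hstep T

end

end

theorem exponential_weights_regret_general
    {E : Type*} [AddCommGroup E] [Module ℝ E] {Y : Type*}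
    (X : Set E) (ℓ : E → Y → ℝ) (η : ℝ) (hη : 0 < η)
    (hexp : ∀ (yy : Y) (N : ℕ), 1 ≤ N → ∀ xs : Fin N → E, (∀ i, xs i ∈ X) →
      ∀ vv : Fin N → ℝ, (∀ i, 0 ≤ vv i) → (∑ i, vv i) = 1 →
      ℓ (∑ i, vv i • xs i) yy ≤ -(1/η) * Real.log (∑ i, vv i * Real.exp (-η * ℓ (xs i) yy)))
    (M : ℕ)
    (π : Fin M → ℝ) (hπpos : ∀ i, 0 < π i) (hπsum : ∑ i, π i = 1)
    (xe : Fin M → ℕ → E) (hxe : ∀ i t, xe i t ∈ X)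
    (y : ℕ → Y) (xl : ℕ → E)
    -- the learner predicts with exponential weights w_{i,t} = π_i · exp(−η L_{i,t−1})
    (hxl : ∀ t, 1 ≤ t → xl t =
      (∑ i, π i * Real.exp (-η * ∑ s ∈ Finset.Icc 1 (t-1), ℓ (xe i s) (y s)))⁻¹ •
        ∑ i, (π i * Real.exp (-η * ∑ s ∈ Finset.Icc 1 (t-1), ℓ (xe i s) (y s))) • xe i t) :
    ∀ T : ℕ, 1 ≤ T → ∀ i : Fin M,
      (∑ t ∈ Finset.Icc 1 T, ℓ (xl t) (y t)) - (∑ t ∈ Finset.Icc 1 T, ℓ (xe i t) (y t))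
        ≤ (1/η) * Real.log (1 / π i) := by
  intro T _ i
  have : Nonempty (Fin M) := ⟨i⟩
  refine regret_le_of_cumLoss_le_neg_log_expWeightsPotential hη hπpos ?_ i
  refine IsExpConcave.cumLoss_le_neg_log_expWeightsPotential hexp hπpos hπsum hxe (fun t => ?_) T
  have h := hxl (t + 1) (Nat.le_add_left 1 t)
  rwa [Nat.add_sub_cancel] at h

/-- **Exponential weights regret bound (Proposition 1, first part).**
For an η-exp-concave loss, the exponential weights algorithm with prior π
achieves, for every horizon T ≥ 1 and every expert i, irrespective of the
signal and the experts' predictions, the bound L_T − L_{i,T} ≤ (1/η)·log(1/π_i). -/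
theorem exponential_weights_regret
    {E : Type*} [AddCommGroup E] [Module ℝ E] {Y : Type*}
    (X : Set E) (ℓ : E → Y → ℝ) (η : ℝ) (hη : 0 < η)
    (hexp : ∀ (yy : Y) (N : ℕ), 1 ≤ N → ∀ xs : Fin N → E, (∀ i, xs i ∈ X) →
      ∀ vv : Fin N → ℝ, (∀ i, 0 ≤ vv i) → (∑ i, vv i) = 1 →
      ℓ (∑ i, vv i • xs i) yy ≤ -(1/η) * Real.log (∑ i, vv i * Real.exp (-η * ℓ (xs i) yy)))
    (M : ℕ) (hM : 1 ≤ M)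
    (π : Fin M → ℝ) (hπpos : ∀ i, 0 < π i) (hπsum : ∑ i, π i = 1)
    (xe : Fin M → ℕ → E) (hxe : ∀ i t, xe i t ∈ X)
    (y : ℕ → Y) (xl : ℕ → E)
    -- the learner predicts with exponential weights w_{i,t} = π_i · exp(−η L_{i,t−1})
    (hxl : ∀ t, 1 ≤ t → xl t =
      (∑ i, π i * Real.exp (-η * ∑ s ∈ Finset.Icc 1 (t-1), ℓ (xe i s) (y s)))⁻¹ •
        ∑ i, (π i * Real.exp (-η * ∑ s ∈ Finset.Icc 1 (t-1), ℓ (xe i s) (y s))) • xe i t) :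
    ∀ T : ℕ, 1 ≤ T → ∀ i : Fin M,
      (∑ t ∈ Finset.Icc 1 T, ℓ (xl t) (y t)) - (∑ t ∈ Finset.Icc 1 T, ℓ (xe i t) (y t))
        ≤ (1/η) * Real.log (1 / π i) :=
  exponential_weights_regret_general X ℓ η hη hexp M π hπpos hπsum xe hxe y xl hxl
end

section
/- Exponential weights achieves, for every horizon T ≥ 1 and every probability vector u = (u_1,…,u_M), the bound L_T − Σ_{i=1}^M u_i L_{i,T} ≤ (1/η) · KL(u ‖ π), where KL(u ‖ π) = Σ_{i=1}^M u_i log(u_i/π_i) is the Kullback–Leibler divergence. -/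
lemma jensen_log {M : ℕ} (u z : Fin M → ℝ) (hu : ∀ i, 0 ≤ u i)
    (hsum : ∑ i, u i = 1) (hz0 : ∀ i, 0 ≤ z i) (hz : ∀ i, u i ≠ 0 → 0 < z i) :
    ∑ i, u i * Real.log (z i) ≤ Real.log (∑ i, u i * z i) := by
  have hex : ∃ i, u i ≠ 0 := by
    by_contra h
    push_neg at h
    simp [h] at hsum
  obtain ⟨j, hj⟩ := hex
  have hpos : 0 < ∑ i, u i * z i := by
    refine Finset.sum_pos' (fun i _ => mul_nonneg (hu i) (hz0 i)) ⟨j, Finset.mem_univ j, ?_⟩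
    exact mul_pos ((hu j).lt_of_ne (Ne.symm hj)) (hz j hj)
  rw [Real.le_log_iff_exp_le hpos, Real.exp_sum]
  have heq : ∀ i, Real.exp (u i * Real.log (z i)) = z i ^ u i := by
    intro i
    rcases eq_or_ne (u i) 0 with h | h
    · simp [h]
    · rw [Real.rpow_def_of_pos (hz i h), mul_comm]
  simp_rw [heq]
  exact Real.geom_mean_le_arith_mean_weighted Finset.univ u z
    (fun i _ => hu i) hsum (fun i _ => hz0 i)

/-- **Exponential weights, comparison to convex combinations (Proposition 1, second part).**
For every T ≥ 1 and every probability vector u, the exponential weights algorithm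
achieves L_T − Σ_i u_i L_{i,T} ≤ (1/η) · KL(u ‖ π). -/
theorem exponential_weights_regret_KL
    {E : Type*} [AddCommGroup E] [Module ℝ E] {Y : Type*}
    (X : Set E) (ℓ : E → Y → ℝ) (η : ℝ) (hη : 0 < η)
    (hexp : ∀ (yy : Y) (N : ℕ), 1 ≤ N → ∀ xs : Fin N → E, (∀ i, xs i ∈ X) →
      ∀ vv : Fin N → ℝ, (∀ i, 0 ≤ vv i) → (∑ i, vv i) = 1 →
      ℓ (∑ i, vv i • xs i) yy ≤ -(1/η) * Real.log (∑ i, vv i * Real.exp (-η * ℓ (xs i) yy)))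
    (M : ℕ) (hM : 1 ≤ M)
    (π : Fin M → ℝ) (hπpos : ∀ i, 0 < π i) (hπsum : ∑ i, π i = 1)
    (xe : Fin M → ℕ → E) (hxe : ∀ i t, xe i t ∈ X)
    (y : ℕ → Y) (xl : ℕ → E)
    -- the learner predicts with exponential weights w_{i,t} = π_i · exp(−η L_{i,t−1})
    (hxl : ∀ t, 1 ≤ t → xl t =
      (∑ i, π i * Real.exp (-η * ∑ s ∈ Finset.Icc 1 (t-1), ℓ (xe i s) (y s)))⁻¹ •
        ∑ i, (π i * Real.exp (-η * ∑ s ∈ Finset.Icc 1 (t-1), ℓ (xe i s) (y s))) • xe i t) :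
    ∀ T : ℕ, 1 ≤ T → ∀ u : Fin M → ℝ, (∀ i, 0 ≤ u i) → (∑ i, u i) = 1 →
      (∑ t ∈ Finset.Icc 1 T, ℓ (xl t) (y t))
          - (∑ i, u i * ∑ t ∈ Finset.Icc 1 T, ℓ (xe i t) (y t))
        ≤ (1/η) * ∑ i, u i * Real.log (u i / π i) := by
  intro T hT u hu husum
  -- cumulative loss of expert i up to time t
  set L : Fin M → ℕ → ℝ := fun i t => ∑ s ∈ Finset.Icc 1 t, ℓ (xe i s) (y s) with hL
  -- potential
  set W : ℕ → ℝ := fun t => ∑ i, π i * Real.exp (-η * L i t) with hW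
  have hWpos : ∀ t, 0 < W t := by
    intro t
    have : Nonempty (Fin M) := Fin.pos_iff_nonempty.mp hM
    exact Finset.sum_pos (fun i _ => mul_pos (hπpos i) (Real.exp_pos _)) Finset.univ_nonempty
  have hW0 : W 0 = 1 := by
    simp [hW, hL, hπsum]
  -- one-step bound
  have hstep : ∀ n : ℕ, ℓ (xl (n+1)) (y (n+1)) ≤
      -(1/η) * (Real.log (W (n+1)) - Real.log (W n)) := by
    intro n
    set c : Fin M → ℝ := fun i => π i * Real.exp (-η * L i n) with hc
    have hcpos : ∀ i, 0 < c i := fun i => mul_pos (hπpos i) (Real.exp_pos _)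
    have hS : W n = ∑ i, c i := rfl
    set v : Fin M → ℝ := fun i => c i / W n with hv
    have hv0 : ∀ i, 0 ≤ v i := fun i => div_nonneg (hcpos i).le (hWpos n).le
    have hvsum : ∑ i, v i = 1 := by
      rw [hv]
      simp only
      rw [← Finset.sum_div, ← hS, div_self (hWpos n).ne']
    have hxleq : xl (n+1) = ∑ i, v i • xe i (n+1) := by
      rw [hxl (n+1) (Nat.le_add_left 1 n)]
      simp only [Nat.add_sub_cancel]
      rw [Finset.smul_sum]
      refine Finset.sum_congr rfl (fun i _ => ?_)
      rw [smul_smul, hv]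
      simp only
      rw [div_eq_inv_mul, hS, hc, hL]
    have key := hexp (y (n+1)) M hM (fun i => xe i (n+1)) (fun i => hxe i (n+1)) v hv0 hvsum
    rw [← hxleq] at key
    refine key.trans ?_
    have hratio : (∑ i, v i * Real.exp (-η * ℓ (xe i (n+1)) (y (n+1)))) = W (n+1) / W n := by
      have : ∀ i : Fin M, v i * Real.exp (-η * ℓ (xe i (n+1)) (y (n+1)))
          = (π i * Real.exp (-η * L i (n+1))) / W n := by
        intro i
        have hLrec : L i (n+1) = L i n + ℓ (xe i (n+1)) (y (n+1)) := by
          rw [hL]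
          simp only
          rw [Finset.sum_Icc_succ_top (Nat.le_add_left 1 n)]
        rw [hLrec, hv]
        simp only
        rw [hc]
        rw [div_mul_eq_mul_div, mul_assoc, ← Real.exp_add]
        ring_nf
      simp_rw [this]
      rw [← Finset.sum_div, hW]
    rw [hratio, Real.log_div (hWpos (n+1)).ne' (hWpos n).ne']
  -- summed bound
  have hsumbound : ∀ n : ℕ, (∑ t ∈ Finset.Icc 1 n, ℓ (xl t) (y t)) ≤ -(1/η) * Real.log (W n) := by
    intro n
    induction n with
    | zero => simp [hW0]
    | succ m ih =>
        rw [Finset.sum_Icc_succ_top (Nat.le_add_left 1 m)]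
        have := hstep m
        nlinarith [this, ih]
  -- lower bound on log (W T) via Jensen
  have hlower : -(∑ i, u i * Real.log (u i / π i)) - η * (∑ i, u i * L i T)
      ≤ Real.log (W T) := by
    set z : Fin M → ℝ := fun i => (π i / u i) * Real.exp (-η * L i T) with hz
    have hz0 : ∀ i, 0 ≤ z i := fun i =>
      mul_nonneg (div_nonneg (hπpos i).le (hu i)) (Real.exp_pos _).le
    have hzpos : ∀ i, u i ≠ 0 → 0 < z i := by
      intro i hi
      exact mul_pos (div_pos (hπpos i) ((hu i).lt_of_ne (Ne.symm hi))) (Real.exp_pos _)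
    have hJ := jensen_log u z hu husum hz0 hzpos
    have hsz : ∑ i, u i * z i ≤ W T := by
      refine Finset.sum_le_sum (fun i _ => ?_)
      rcases eq_or_ne (u i) 0 with h | h
      · rw [h, zero_mul]
        exact (mul_pos (hπpos i) (Real.exp_pos _)).le
      · rw [hz]
        simp only
        rw [← mul_assoc, mul_div_assoc', mul_comm (u i) (π i), mul_div_assoc,
          div_self h, mul_one]
    have hlogle : Real.log (∑ i, u i * z i) ≤ Real.log (W T) := by
      refine Real.log_le_log ?_ hsz
      have hex : ∃ j, u j ≠ 0 := by
        by_contra h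
        push_neg at h
        simp [h] at husum
      obtain ⟨j, hj⟩ := hex
      refine Finset.sum_pos' (fun i _ => mul_nonneg (hu i) (hz0 i))
        ⟨j, Finset.mem_univ j, mul_pos ((hu j).lt_of_ne (Ne.symm hj)) (hzpos j hj)⟩
    refine le_trans (le_of_eq ?_) (hJ.trans hlogle)
    have hptw : ∀ i, u i * Real.log (z i)
        = -(u i * Real.log (u i / π i)) - η * (u i * L i T) := by
      intro i
      rcases eq_or_ne (u i) 0 with h | h
      · simp [h]
      · rw [hz]
        simp only
        rw [Real.log_mul (div_ne_zero (hπpos i).ne' h) (Real.exp_ne_zero _),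
          Real.log_exp, Real.log_div (hπpos i).ne' h, Real.log_div h (hπpos i).ne']
        ring
    rw [Finset.mul_sum, ← Finset.sum_neg_distrib, ← Finset.sum_sub_distrib]
    exact Finset.sum_congr rfl (fun i _ => (hptw i).symm)
  -- combine
  have hfinal := hsumbound T
  have hWT := hlower
  have hL' : (∑ i, u i * ∑ t ∈ Finset.Icc 1 T, ℓ (xe i t) (y t)) = ∑ i, u i * L i T := rfl
  rw [hL']
  have h3 := mul_le_mul_of_nonneg_left hWT (le_of_lt (by positivity : (0:ℝ) < 1/η))
  have h5 : (1/η) * (-(∑ i, u i * Real.log (u i / π i)) - η * ∑ i, u i * L i T)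
      = -((1/η) * ∑ i, u i * Real.log (u i / π i)) - ∑ i, u i * L i T := by
    field_simp
  linarith [hfinal, h3, h5]
end

section
/- The specialist aggregation algorithm with prior π achieves, for every T ≥ 1 and every probability vector u = (u_1,…,u_M), the bound Σ_{i=1}^M u_i · Σ_{t ≤ T : i ∈ A_t} (ℓ_t − ℓ_{i,t}) ≤ (1/η) · KL(u ‖ π), where KL(u ‖ π) = Σ_{i=1}^M u_i log(u_i/π_i). -/
/-! The potential `Φ_t = ∑ᵢ πᵢ exp (-η L_{i,t})` satisfies `Φ_t ≤ exp (-η ℓ_t) Φ_{t-1}`: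
exp-concavity applied to the normalized weights of the active specialists bounds their
contribution, and each inactive specialist is charged exactly the learner's loss `ℓ_t`.
Hence `log Φ_T ≤ -η ∑_t ℓ_t`, while Gibbs' variational inequality gives
`log Φ_T ≥ -η ∑ᵢ uᵢ L_{i,T} - KL(u ‖ π)`. Since the regret to specialist `i` on its active
rounds is `∑_t ℓ_t - L_{i,T}`, the two bounds combine to the claim. -/

open Finset

section

open Real

theorem Finset.sum_equivFin_symm {ι β : Type*} [AddCommMonoid β] (s : Finset ι) (f : ι → β) :
    ∑ k : Fin #s, f (s.equivFin.symm k) = ∑ i ∈ s, f i := by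
  rw [Equiv.sum_comp s.equivFin.symm (fun i : s => f i), sum_coe_sort]

theorem sum_mul_le_log_sum_mul_exp_add_sum_mul_log_div {ι : Type*} [Fintype ι] {u q : ι → ℝ}
    (hu : ∀ i, 0 ≤ u i) (hu1 : ∑ i, u i = 1) (hq : ∀ i, 0 < q i) (f : ι → ℝ) :
    ∑ i, u i * f i ≤ log (∑ i, q i * exp (f i)) + ∑ i, u i * log (u i / q i) := by
  set Z := ∑ i, q i * exp (f i)
  have hZ : 0 < Z :=
    sum_pos (fun i _ => mul_pos (hq i) (exp_pos _)) (nonempty_of_sum_ne_zero (hu1 ▸ one_ne_zero))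
  have hterm : ∀ i, u i * (f i - log (u i / q i) - log Z) ≤ q i * exp (f i) / Z - u i := by
    intro i
    rcases (hu i).eq_or_lt with hui | hui
    · rw [← hui, zero_mul, sub_zero]; exact div_nonneg (mul_pos (hq i) (exp_pos _)).le hZ.le
    have hexp : exp (f i - log (u i / q i) - log Z) = q i * exp (f i) / (u i * Z) := by
      rw [exp_sub, exp_sub, exp_log (div_pos hui (hq i)), exp_log hZ]
      field_simp
    calc u i * (f i - log (u i / q i) - log Z)
        ≤ u i * (exp (f i - log (u i / q i) - log Z) - 1) :=
          mul_le_mul_of_nonneg_left (by linarith [add_one_le_exp (f i - log (u i / q i) - log Z)]) hui.le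
      _ = q i * exp (f i) / Z - u i := by rw [hexp]; field_simp
  have hsum := sum_le_sum fun i (_ : i ∈ univ) => hterm i
  simp only [mul_sub, sum_sub_distrib, ← sum_mul, ← sum_div, hu1] at hsum
  rw [div_self hZ.ne'] at hsum
  linarith

theorem sum_mul_ite_le {ι : Type*} [Fintype ι] [DecidableEq ι] (s : Finset ι) {w g : ι → ℝ} {c : ℝ}
    (h : ∑ i ∈ s, w i * g i ≤ c * ∑ i ∈ s, w i) :
    ∑ i, w i * (if i ∈ s then g i else c) ≤ c * ∑ i, w i :=
  calc ∑ i, w i * (if i ∈ s then g i else c)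
      = ∑ i, (c * w i + if i ∈ s then w i * g i - c * w i else 0) :=
        sum_congr rfl fun i _ => by split_ifs <;> ring
    _ = c * ∑ i, w i + (∑ i ∈ s, w i * g i - c * ∑ i ∈ s, w i) := by
        rw [sum_add_distrib, sum_ite_mem, univ_inter, sum_sub_distrib, mul_sum, mul_sum]
    _ ≤ c * ∑ i, w i := by linarith

theorem Finset.sum_filter_sub_eq_sub_sum_ite {ι : Type*} (s : Finset ι) (p : ι → Prop)
    [DecidablePred p] (a b : ι → ℝ) :
    ∑ t ∈ s.filter p, (a t - b t) = ∑ t ∈ s, a t - ∑ t ∈ s, (if p t then b t else a t) := by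
  rw [sum_filter, ← sum_sub_distrib]
  exact sum_congr rfl fun t _ => by split_ifs <;> ring

theorem le_prod_Icc_mul_of_succ_le {Φ a : ℕ → ℝ} (ha : ∀ n, 0 ≤ a n)
    (h : ∀ n, Φ (n + 1) ≤ a (n + 1) * Φ n) (n : ℕ) : Φ n ≤ (∏ t ∈ Icc 1 n, a t) * Φ 0 := by
  induction n with
  | zero => simp
  | succ n ih =>
    rw [prod_Icc_succ_top (Nat.le_add_left 1 n), mul_comm _ (a (n + 1)), mul_assoc]
    exact (h n).trans (mul_le_mul_of_nonneg_left ih (ha _))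

end

section ExpConcave

variable {E Y ι : Type*} [AddCommGroup E] [Module ℝ E] {X : Set E} {ℓ : E → Y → ℝ} {η : ℝ}

variable (X ℓ η) in
def ExpConcaveOn : Prop :=
  ∀ (yy : Y) (N : ℕ), 1 ≤ N → ∀ xs : Fin N → E, (∀ i, xs i ∈ X) →
    ∀ vv : Fin N → ℝ, (∀ i, 0 ≤ vv i) → (∑ i, vv i) = 1 →
    ℓ (∑ i, vv i • xs i) yy ≤ -(1/η) * Real.log (∑ i, vv i * Real.exp (-η * ℓ (xs i) yy))

theorem ExpConcaveOn.le_finset (h : ExpConcaveOn X ℓ η) {s : Finset ι} (hs : s.Nonempty)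
    {v : ι → ℝ} (hv : ∀ i ∈ s, 0 ≤ v i) (hv1 : ∑ i ∈ s, v i = 1) {x : ι → E}
    (hx : ∀ i ∈ s, x i ∈ X) (y : Y) :
    ℓ (∑ i ∈ s, v i • x i) y ≤ -(1/η) * Real.log (∑ i ∈ s, v i * Real.exp (-η * ℓ (x i) y)) := by
  have := h y #s hs.card_pos (fun k => x (s.equivFin.symm k)) (fun k => hx _ (s.equivFin.symm k).2)
    (fun k => v (s.equivFin.symm k)) (fun k => hv _ (s.equivFin.symm k).2)
    (by rw [sum_equivFin_symm s v, hv1])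
  rwa [sum_equivFin_symm s (fun i => v i • x i),
    sum_equivFin_symm s (fun i => v i * Real.exp (-η * ℓ (x i) y))] at this

theorem ExpConcaveOn.sum_mul_exp_le (h : ExpConcaveOn X ℓ η) (hη : 0 < η) {s : Finset ι}
    {w : ι → ℝ} (hw : ∀ i ∈ s, 0 < w i) {x : ι → E} (hx : ∀ i ∈ s, x i ∈ X) (y : Y) :
    ∑ i ∈ s, w i * Real.exp (-η * ℓ (x i) y)
      ≤ Real.exp (-η * ℓ ((∑ i ∈ s, w i)⁻¹ • ∑ i ∈ s, w i • x i) y) * ∑ i ∈ s, w i := by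
  rcases s.eq_empty_or_nonempty with rfl | hs
  · simp
  set W := ∑ i ∈ s, w i
  set S := ∑ i ∈ s, w i * Real.exp (-η * ℓ (x i) y)
  have hW : 0 < W := sum_pos hw hs
  have hS : 0 < S := sum_pos (fun i hi => mul_pos (hw i hi) (Real.exp_pos _)) hs
  have hmix := h.le_finset hs (v := fun i => w i / W) (fun i hi => (div_pos (hw i hi) hW).le)
    (by rw [← sum_div, div_self hW.ne']) hx y
  have hmean : ∑ i ∈ s, (w i / W) • x i = W⁻¹ • ∑ i ∈ s, w i • x i := by
    simp only [smul_sum, smul_smul, div_eq_inv_mul]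
  have hratio : ∑ i ∈ s, w i / W * Real.exp (-η * ℓ (x i) y) = S / W := by
    simp only [sum_div, div_mul_eq_mul_div, S]
  rw [hmean, hratio] at hmix
  have hlog : Real.log (S / W) ≤ -η * ℓ (W⁻¹ • ∑ i ∈ s, w i • x i) y := by
    rw [one_div, neg_mul, ← mul_neg, ← div_eq_inv_mul, le_div_iff₀ hη] at hmix
    linarith
  rwa [Real.log_le_iff_le_exp (div_pos hS hW), div_le_iff₀ hW] at hlog

theorem ExpConcaveOn.sum_mul_exp_ite_le [Fintype ι] [DecidableEq ι] (h : ExpConcaveOn X ℓ η)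
    (hη : 0 < η) (s : Finset ι) {w : ι → ℝ} (hw : ∀ i, 0 < w i) {x : ι → E}
    (hx : ∀ i ∈ s, x i ∈ X) (y : Y) :
    ∑ i, w i * Real.exp (-η *
        if i ∈ s then ℓ (x i) y else ℓ ((∑ i ∈ s, w i)⁻¹ • ∑ i ∈ s, w i • x i) y)
      ≤ Real.exp (-η * ℓ ((∑ i ∈ s, w i)⁻¹ • ∑ i ∈ s, w i • x i) y) * ∑ i, w i := by
  simp only [apply_ite (-η * ·), apply_ite Real.exp]
  exact sum_mul_ite_le s (h.sum_mul_exp_le hη (fun i _ => hw i) hx y)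

end ExpConcave

theorem specialist_aggregation_regret_KL_general
    {E : Type*} [AddCommGroup E] [Module ℝ E] {Y : Type*}
    (X : Set E) (ℓ : E → Y → ℝ) (η : ℝ) (hη : 0 < η)
    (hexp : ∀ (yy : Y) (N : ℕ), 1 ≤ N → ∀ xs : Fin N → E, (∀ i, xs i ∈ X) →
      ∀ vv : Fin N → ℝ, (∀ i, 0 ≤ vv i) → (∑ i, vv i) = 1 →
      ℓ (∑ i, vv i • xs i) yy ≤ -(1/η) * Real.log (∑ i, vv i * Real.exp (-η * ℓ (xs i) yy)))
    (M : ℕ)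
    (π : Fin M → ℝ) (hπpos : ∀ i, 0 < π i) (hπsum : ∑ i, π i = 1)
    (A : ℕ → Finset (Fin M))
    (xe : Fin M → ℕ → E) (hxe : ∀ i t, 1 ≤ t → i ∈ A t → xe i t ∈ X)
    (y : ℕ → Y) (xl : ℕ → E)
    (Lc : Fin M → ℕ → ℝ)
    -- completed cumulative losses L_{i,t} = Σ_{s ≤ t : i ∈ A_s} ℓ_{i,s} + Σ_{s ≤ t : i ∉ A_s} ℓ_s
    (hLc : ∀ i t, Lc i t = ∑ s ∈ Finset.Icc 1 t,
      (if i ∈ A s then ℓ (xe i s) (y s) else ℓ (xl s) (y s)))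
    -- the learner aggregates the active specialists with weights w_{i,t} = π_i exp(−η L_{i,t−1})
    (hxl : ∀ t, 1 ≤ t → xl t =
      (∑ i ∈ A t, π i * Real.exp (-η * Lc i (t-1)))⁻¹ •
        ∑ i ∈ A t, (π i * Real.exp (-η * Lc i (t-1))) • xe i t) :
    ∀ T : ℕ, 1 ≤ T → ∀ u : Fin M → ℝ, (∀ i, 0 ≤ u i) → (∑ i, u i) = 1 →
      ∑ i, u i * (∑ t ∈ (Finset.Icc 1 T).filter (fun t => i ∈ A t),
          (ℓ (xl t) (y t) - ℓ (xe i t) (y t)))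
        ≤ (1/η) * ∑ i, u i * Real.log (u i / π i) := by
  intro T _ u hu hu1
  set Φ : ℕ → ℝ := fun t => ∑ i, π i * Real.exp (-η * Lc i t)
  set C := ∑ t ∈ Icc 1 T, ℓ (xl t) (y t)
  have hstep : ∀ n, Φ (n + 1) ≤ Real.exp (-η * ℓ (xl (n + 1)) (y (n + 1))) * Φ n := by
    intro n
    have hround := ExpConcaveOn.sum_mul_exp_ite_le hexp hη (A (n + 1))
      (fun i => mul_pos (hπpos i) (Real.exp_pos (-η * Lc i n)))
      (fun i hi => hxe i (n + 1) n.succ_pos hi) (y (n + 1))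
    have hxl' := hxl (n + 1) n.succ_pos
    rw [Nat.add_sub_cancel] at hxl'
    rw [← hxl'] at hround
    convert hround using 2 with i
    rw [hLc, sum_Icc_succ_top (Nat.le_add_left 1 n), ← hLc, mul_add, Real.exp_add, mul_assoc]
  have hΦ : Φ T ≤ Real.exp (-η * C) := by
    have h0 : Φ 0 = 1 := by simp [Φ, hLc, hπsum]
    have := le_prod_Icc_mul_of_succ_le (a := fun t => Real.exp (-η * ℓ (xl t) (y t)))
      (fun _ => (Real.exp_pos _).le) hstep T
    rwa [h0, mul_one, ← Real.exp_sum, ← mul_sum] at this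
  have hΦpos : 0 < Φ T := sum_pos (fun i _ => mul_pos (hπpos i) (Real.exp_pos _))
    (nonempty_of_sum_ne_zero (hu1 ▸ one_ne_zero))
  have hlog : Real.log (Φ T) ≤ -η * C := (Real.log_le_iff_le_exp hΦpos).2 hΦ
  have hgibbs := sum_mul_le_log_sum_mul_exp_add_sum_mul_log_div hu hu1 hπpos (fun i => -η * Lc i T)
  simp only [sum_filter_sub_eq_sub_sum_ite, ← hLc]
  simp only [mul_sub, sum_sub_distrib, ← sum_mul, hu1, one_mul]
  simp only [mul_left_comm _ (-η), ← mul_sum] at hgibbs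
  rw [one_div_mul_eq_div, le_div_iff₀' hη]
  linarith

/-- **Specialist aggregation regret bound (Proposition 2, first part).**
The specialist aggregation algorithm with prior π achieves, for every specialist i
and every T ≥ 1, the bound Σ_{t ≤ T : i ∈ A_t} (ℓ_t − ℓ_{i,t}) ≤ (1/η)·log(1/π_i). -/
theorem specialist_aggregation_regret_KL
    {E : Type*} [AddCommGroup E] [Module ℝ E] {Y : Type*}
    (X : Set E) (ℓ : E → Y → ℝ) (η : ℝ) (hη : 0 < η)
    (hexp : ∀ (yy : Y) (N : ℕ), 1 ≤ N → ∀ xs : Fin N → E, (∀ i, xs i ∈ X) →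
      ∀ vv : Fin N → ℝ, (∀ i, 0 ≤ vv i) → (∑ i, vv i) = 1 →
      ℓ (∑ i, vv i • xs i) yy ≤ -(1/η) * Real.log (∑ i, vv i * Real.exp (-η * ℓ (xs i) yy)))
    (M : ℕ) (hM : 1 ≤ M)
    (π : Fin M → ℝ) (hπpos : ∀ i, 0 < π i) (hπsum : ∑ i, π i = 1)
    (A : ℕ → Finset (Fin M)) (hA : ∀ t, 1 ≤ t → (A t).Nonempty)
    (xe : Fin M → ℕ → E) (hxe : ∀ i t, 1 ≤ t → i ∈ A t → xe i t ∈ X)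
    (y : ℕ → Y) (xl : ℕ → E)
    (Lc : Fin M → ℕ → ℝ)
    -- completed cumulative losses L_{i,t} = Σ_{s ≤ t : i ∈ A_s} ℓ_{i,s} + Σ_{s ≤ t : i ∉ A_s} ℓ_s
    (hLc : ∀ i t, Lc i t = ∑ s ∈ Finset.Icc 1 t,
      (if i ∈ A s then ℓ (xe i s) (y s) else ℓ (xl s) (y s)))
    -- the learner aggregates the active specialists with weights w_{i,t} = π_i exp(−η L_{i,t−1})
    (hxl : ∀ t, 1 ≤ t → xl t =
      (∑ i ∈ A t, π i * Real.exp (-η * Lc i (t-1)))⁻¹ •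
        ∑ i ∈ A t, (π i * Real.exp (-η * Lc i (t-1))) • xe i t) :
    ∀ T : ℕ, 1 ≤ T → ∀ u : Fin M → ℝ, (∀ i, 0 ≤ u i) → (∑ i, u i) = 1 →
      ∑ i, u i * (∑ t ∈ (Finset.Icc 1 T).filter (fun t => i ∈ A t),
          (ℓ (xl t) (y t) - ℓ (xe i t) (y t)))
        ≤ (1/η) * ∑ i, u i * Real.log (u i / π i) :=
  specialist_aggregation_regret_KL_general X ℓ η hη hexp M π hπpos hπsum A xe hxe y xl Lc hLc hxl
end

section
/- The GrowingHedge algorithm with weights π_i = 1/(τ_i · m_{τ_i}) achieves, for every T ≥ 1 and every expert i ≤ M_T, the regret bound Σ_{t=τ_i}^T (ℓ_t − ℓ_{i,t}) ≤ (1/η) log m_{τ_i} + (1/η) log τ_i + (1/η) log(1 + log T). -/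
/-!
The potential `exp (η L_t) * ∑_{j ≤ M_t} w_{j,t+1}`, with `L_t` the learner's cumulative loss,
never exceeds the prior mass `∑_{j ≤ M_t} π_j` of the experts present: by exp-concavity the
update shrinks the total weight of the present experts by at least the factor `exp (-η ℓ_t)`, and
each newcomer `j` enters with weight `π_j exp (-η L_t)`. As expert `i` holds the weight
`π_i exp (-η L_{τ_i - 1} - η ∑_{t = τ_i}^T ℓ_{i,t})` at time `T + 1`, this gives
`π_i exp (η · regret) ≤ ∑_{j ≤ M_T} π_j`. With `π_j = 1 / (τ_j m_{τ_j})` the experts entering at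
time `s` carry mass exactly `1 / s`, so the prior mass is at most `H_T ≤ 1 + log T`.
-/

open Finset

def ExpConcave {E Y : Type*} [AddCommGroup E] [Module ℝ E] (X : Set E) (ℓ : E → Y → ℝ) (η : ℝ) :
    Prop :=
  ∀ (yy : Y) (N : ℕ), 1 ≤ N → ∀ xs : Fin N → E, (∀ i, xs i ∈ X) →
    ∀ vv : Fin N → ℝ, (∀ i, 0 ≤ vv i) → (∑ i, vv i) = 1 →
    ℓ (∑ i, vv i • xs i) yy ≤ -(1/η) * Real.log (∑ i, vv i * Real.exp (-η * ℓ (xs i) yy))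

theorem Finset.sum_comp_equivFin_symm {ι M : Type*} [AddCommMonoid M] (s : Finset ι)
    (f : ι → M) : ∑ k, f (s.equivFin.symm k) = ∑ j ∈ s, f j :=
  (s.equivFin.symm.sum_comp fun j : s => f j).trans (sum_coe_sort s f)

namespace ExpConcave

variable {E Y : Type*} [AddCommGroup E] [Module ℝ E] {X : Set E} {ℓ : E → Y → ℝ} {η : ℝ}

theorem sum_mul_exp_le_exp (h : ExpConcave X ℓ η) (hη : 0 < η) (y : Y) {N : ℕ}
    {xs : Fin N → E} (hxs : ∀ i, xs i ∈ X) {v : Fin N → ℝ} (hv : ∀ i, 0 ≤ v i)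
    (hv1 : ∑ i, v i = 1) :
    ∑ i, v i * Real.exp (-η * ℓ (xs i) y) ≤ Real.exp (-η * ℓ (∑ i, v i • xs i) y) := by
  obtain ⟨i₀, -, hi₀⟩ : ∃ i ∈ univ, (0 : Fin N → ℝ) i < v i :=
    exists_lt_of_sum_lt (by simp [hv1])
  have hpos : 0 < ∑ i, v i * Real.exp (-η * ℓ (xs i) y) :=
    sum_pos' (fun i _ => mul_nonneg (hv i) (Real.exp_pos _).le)
      ⟨i₀, mem_univ _, mul_pos hi₀ (Real.exp_pos _)⟩
  have hloss :=
    mul_le_mul_of_nonneg_left (h y N (Fin.pos_iff_nonempty.2 ⟨i₀⟩) xs hxs v hv hv1) hη.le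
  rw [← mul_assoc, mul_neg, mul_one_div_cancel hη.ne', neg_one_mul] at hloss
  rw [← Real.log_le_iff_le_exp hpos]
  linarith

theorem sum_mul_exp_le (h : ExpConcave X ℓ η) (hη : 0 < η) (y : Y) {ι : Type*} (s : Finset ι)
    {x : ι → E} (hx : ∀ j ∈ s, x j ∈ X) {w : ι → ℝ} (hw : ∀ j ∈ s, 0 ≤ w j) :
    ∑ j ∈ s, w j * Real.exp (-η * ℓ (x j) y)
      ≤ (∑ j ∈ s, w j) * Real.exp (-η * ℓ ((∑ j ∈ s, w j)⁻¹ • ∑ j ∈ s, w j • x j) y) := by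
  rcases (sum_nonneg hw).eq_or_lt with hW | hW
  · have hzero := (sum_eq_zero_iff_of_nonneg hw).1 hW.symm
    rw [← hW, zero_mul]
    exact (sum_eq_zero fun j hj => by rw [hzero j hj, zero_mul]).le
  set W := ∑ j ∈ s, w j
  have key := h.sum_mul_exp_le_exp hη y (xs := fun k => x (s.equivFin.symm k))
    (fun k => hx _ (s.equivFin.symm k).2) (v := fun k => W⁻¹ * w (s.equivFin.symm k))
    (fun k => mul_nonneg (inv_nonneg.2 hW.le) (hw _ (s.equivFin.symm k).2))
    (by rw [← mul_sum, s.sum_comp_equivFin_symm w, inv_mul_cancel₀ hW.ne'])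
  simp only [mul_assoc, mul_smul, ← mul_sum, ← smul_sum] at key
  rwa [s.sum_comp_equivFin_symm (fun j => w j * Real.exp (-η * ℓ (x j) y)),
    s.sum_comp_equivFin_symm (fun j => w j • x j), inv_mul_le_iff₀ hW] at key

end ExpConcave

theorem Finset.sum_Icc_one_add_sum_Icc {M : Type*} [AddCommMonoid M] (f : ℕ → M) {a b : ℕ}
    (hab : a ≤ b) : ∑ j ∈ Icc 1 a, f j + ∑ j ∈ Icc (a + 1) b, f j = ∑ j ∈ Icc 1 b, f j := by
  simpa only [← Icc_add_one_left_eq_Ioc, zero_add] using sum_Ioc_consecutive f (Nat.zero_le a) hab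

theorem le_one_div_mul_log_div_of_mul_exp_le {η a b R : ℝ} (hη : 0 < η) (ha : 0 < a)
    (h : a * Real.exp (η * R) ≤ b) : R ≤ 1 / η * Real.log (b / a) := by
  have hexp : Real.exp (η * R) ≤ b / a := (le_div_iff₀' ha).2 h
  have hlog := (Real.le_log_iff_exp_le ((Real.exp_pos _).trans_le hexp)).2 hexp
  rw [one_div, ← div_eq_inv_mul, le_div_iff₀ hη]
  linarith

def IsEntryTime (M τ : ℕ → ℕ) : Prop :=
  ∀ i t, 1 ≤ i → 1 ≤ t → i ≤ M t → 1 ≤ τ i ∧ i ≤ M (τ i) ∧ τ i ≤ t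

namespace IsEntryTime

variable {M τ : ℕ → ℕ}

theorem eq_succ_of_mem_Ioc (hτ : IsEntryTime M τ) (hM : Monotone M) {t j : ℕ} (htj : M t < j)
    (hjt : j ≤ M (t + 1)) : τ j = t + 1 := by
  obtain ⟨-, hjτ, hτt⟩ := hτ j (t + 1) (by omega) (by omega) hjt
  by_contra hne
  have := hjτ.trans (hM (show τ j ≤ t by omega))
  omega

theorem apply_pred_lt (hτ : IsEntryTime M τ) (hM0 : M 0 = 0) {i t : ℕ} (hi : 1 ≤ i) (ht : 1 ≤ t)
    (hit : i ≤ M t) : M (τ i - 1) < i := by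
  by_contra! hle
  obtain ⟨hτ1, -, -⟩ := hτ i t hi ht hit
  have hτ2 : 1 ≤ τ i - 1 := by
    by_contra h
    rw [show τ i - 1 = 0 by omega, hM0] at hle
    omega
  have := (hτ i (τ i - 1) hi hτ2 hle).2.2
  omega

theorem sum_prior_le_harmonic (hτ : IsEntryTime M τ) (hM0 : M 0 = 0) (hM : Monotone M)
    {m : ℕ → ℕ} (hm : ∀ t, 1 ≤ t → m t = M t - M (t - 1)) {π : ℕ → ℝ}
    (hπ : ∀ i, 1 ≤ i → π i = 1 / ((τ i : ℝ) * (m (τ i) : ℝ))) (T : ℕ) :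
    ∑ j ∈ Icc 1 (M T), π j ≤ harmonic T := by
  induction T with
  | zero => simp [hM0]
  | succ T ih =>
    rw [← sum_Icc_one_add_sum_Icc _ (hM T.le_succ), harmonic_succ, Rat.cast_add]
    refine add_le_add ih ?_
    have hnew : ∀ j ∈ Icc (M T + 1) (M (T + 1)),
        π j = 1 / (((T + 1 : ℕ) : ℝ) * ((M (T + 1) - M T : ℕ) : ℝ)) := fun j hj => by
      obtain ⟨hTj, hjT⟩ := mem_Icc.1 hj
      rw [hπ j (by omega), hτ.eq_succ_of_mem_Ioc hM hTj hjT, hm (T + 1) (by omega),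
        Nat.add_sub_cancel]
    rw [sum_congr rfl hnew, sum_const, Nat.card_Icc, Nat.add_sub_add_right, nsmul_eq_mul]
    rcases Nat.eq_zero_or_pos (M (T + 1) - M T) with hc | hc
    · rw [hc, Nat.cast_zero, zero_mul]
      positivity
    · have hc' : ((M (T + 1) - M T : ℕ) : ℝ) ≠ 0 := by positivity
      rw [mul_comm, one_div, mul_inv, inv_mul_cancel_right₀ hc', Rat.cast_inv, Rat.cast_natCast]

end IsEntryTime

/-- The entry rule at `t = 0` is the initialisation `w i 1 = π i`, the empty sum being `0`. -/
structure IsGrowingHedge {E Y : Type*} [AddCommGroup E] [Module ℝ E] (ℓ : E → Y → ℝ) (η : ℝ)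
    (M : ℕ → ℕ) (π : ℕ → ℝ) (xe : ℕ → ℕ → E) (y : ℕ → Y) (xl : ℕ → E) (w : ℕ → ℕ → ℝ) :
    Prop where
  weight_succ : ∀ t, 1 ≤ t → ∀ i, 1 ≤ i → i ≤ M t →
    w i (t + 1) = w i t * Real.exp (-η * ℓ (xe i t) (y t))
  weight_entry : ∀ t i, M t < i → i ≤ M (t + 1) →
    w i (t + 1) = π i * Real.exp (-η * ∑ s ∈ Icc 1 t, ℓ (xl s) (y s))
  predict : ∀ t, 1 ≤ t →
    xl t = (∑ i ∈ Icc 1 (M t), w i t)⁻¹ • ∑ i ∈ Icc 1 (M t), w i t • xe i t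

namespace IsGrowingHedge

variable {E Y : Type*} [AddCommGroup E] [Module ℝ E] {X : Set E} {ℓ : E → Y → ℝ} {η : ℝ}
  {M : ℕ → ℕ} {π : ℕ → ℝ} {xe : ℕ → ℕ → E} {y : ℕ → Y} {xl : ℕ → E} {w : ℕ → ℕ → ℝ}

theorem weight_nonneg (hG : IsGrowingHedge ℓ η M π xe y xl w) (hM0 : M 0 = 0)
    (hπ : ∀ j, 1 ≤ j → 0 ≤ π j) : ∀ t j, 1 ≤ j → j ≤ M (t + 1) → 0 ≤ w j (t + 1) := by
  intro t
  induction t with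
  | zero =>
    intro j hj hjM
    rw [hG.weight_entry 0 j (by omega) hjM]
    exact mul_nonneg (hπ j hj) (Real.exp_pos _).le
  | succ t ih =>
    intro j hj hjM
    rcases le_or_gt j (M (t + 1)) with hold | hnew
    · rw [hG.weight_succ (t + 1) (by omega) j hj hold]
      exact mul_nonneg (ih j hj hold) (Real.exp_pos _).le
    · rw [hG.weight_entry (t + 1) j hnew hjM]
      exact mul_nonneg (hπ j hj) (Real.exp_pos _).le

theorem weight_add_eq (hG : IsGrowingHedge ℓ η M π xe y xl w) (hM : Monotone M) {i s : ℕ}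
    (hi : 1 ≤ i) (hs : 1 ≤ s) (his : i ≤ M s) (n : ℕ) :
    w i (s + n) = w i s * Real.exp (-η * ∑ t ∈ Ico s (s + n), ℓ (xe i t) (y t)) := by
  induction n with
  | zero => simp
  | succ n ih =>
    rw [← add_assoc, hG.weight_succ (s + n) (by omega) i hi (his.trans (hM (s.le_add_right n))),
      ih, sum_Ico_succ_top (s.le_add_right n), mul_add, Real.exp_add, mul_assoc]

theorem exp_mul_sum_weight_succ_le (hG : IsGrowingHedge ℓ η M π xe y xl w)
    (hexp : ExpConcave X ℓ η) (hη : 0 < η) (hxe : ∀ i t, 1 ≤ t → 1 ≤ i → i ≤ M t → xe i t ∈ X)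
    {t : ℕ} (hw : ∀ j ∈ Icc 1 (M (t + 1)), 0 ≤ w j (t + 1)) :
    Real.exp (η * ∑ s ∈ Icc 1 (t + 1), ℓ (xl s) (y s)) * ∑ j ∈ Icc 1 (M (t + 1)), w j (t + 2)
      ≤ Real.exp (η * ∑ s ∈ Icc 1 t, ℓ (xl s) (y s)) * ∑ j ∈ Icc 1 (M (t + 1)), w j (t + 1) := by
  have hstep := hexp.sum_mul_exp_le hη (y (t + 1)) _
    (fun j hj => hxe j (t + 1) (by omega) (mem_Icc.1 hj).1 (mem_Icc.1 hj).2) hw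
  rw [← hG.predict (t + 1) (by omega),
    ← sum_congr rfl fun j hj => hG.weight_succ (t + 1) (by omega) j (mem_Icc.1 hj).1
      (mem_Icc.1 hj).2] at hstep
  rw [sum_Icc_succ_top (by omega), mul_add, Real.exp_add, mul_assoc]
  refine mul_le_mul_of_nonneg_left ?_ (Real.exp_pos _).le
  rw [← le_div_iff₀' (Real.exp_pos _), div_eq_mul_inv, ← Real.exp_neg, ← neg_mul]
  exact hstep

theorem exp_mul_sum_entry_weight (hG : IsGrowingHedge ℓ η M π xe y xl w) (t : ℕ) :
    Real.exp (η * ∑ s ∈ Icc 1 t, ℓ (xl s) (y s)) * ∑ j ∈ Icc (M t + 1) (M (t + 1)), w j (t + 1)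
      = ∑ j ∈ Icc (M t + 1) (M (t + 1)), π j := by
  rw [mul_sum]
  refine sum_congr rfl fun j hj => ?_
  rw [hG.weight_entry t j (mem_Icc.1 hj).1 (mem_Icc.1 hj).2, neg_mul, Real.exp_neg]
  field_simp

theorem potential_le (hG : IsGrowingHedge ℓ η M π xe y xl w) (hexp : ExpConcave X ℓ η)
    (hη : 0 < η) (hM0 : M 0 = 0) (hM : Monotone M) (hπ : ∀ j, 1 ≤ j → 0 ≤ π j)
    (hxe : ∀ i t, 1 ≤ t → 1 ≤ i → i ≤ M t → xe i t ∈ X) (t : ℕ) :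
    Real.exp (η * ∑ s ∈ Icc 1 t, ℓ (xl s) (y s)) * ∑ j ∈ Icc 1 (M t), w j (t + 1)
      ≤ ∑ j ∈ Icc 1 (M t), π j := by
  induction t with
  | zero => simp [hM0]
  | succ t ih =>
    have hw := hG.weight_nonneg hM0 hπ t
    calc _ ≤ Real.exp (η * ∑ s ∈ Icc 1 t, ℓ (xl s) (y s)) * ∑ j ∈ Icc 1 (M (t + 1)), w j (t + 1) :=
          hG.exp_mul_sum_weight_succ_le hexp hη hxe fun j hj =>
            hw j (mem_Icc.1 hj).1 (mem_Icc.1 hj).2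
      _ = Real.exp (η * ∑ s ∈ Icc 1 t, ℓ (xl s) (y s)) * ∑ j ∈ Icc 1 (M t), w j (t + 1)
            + ∑ j ∈ Icc (M t + 1) (M (t + 1)), π j := by
          rw [← sum_Icc_one_add_sum_Icc _ (hM t.le_succ), mul_add, hG.exp_mul_sum_entry_weight]
      _ ≤ ∑ j ∈ Icc 1 (M t), π j + ∑ j ∈ Icc (M t + 1) (M (t + 1)), π j := by gcongr
      _ = ∑ j ∈ Icc 1 (M (t + 1)), π j := sum_Icc_one_add_sum_Icc _ (hM t.le_succ)

theorem regret_le_log (hG : IsGrowingHedge ℓ η M π xe y xl w) (hexp : ExpConcave X ℓ η)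
    (hη : 0 < η) (hM0 : M 0 = 0) (hM : Monotone M) (hπ : ∀ j, 1 ≤ j → 0 ≤ π j)
    (hxe : ∀ i t, 1 ≤ t → 1 ≤ i → i ≤ M t → xe i t ∈ X)
    {i a T : ℕ} (hπi : 0 < π i) (hai : M a < i) (hia : i ≤ M (a + 1)) (haT : a < T) :
    ∑ t ∈ Icc (a + 1) T, (ℓ (xl t) (y t) - ℓ (xe i t) (y t))
      ≤ 1 / η * Real.log ((∑ j ∈ Icc 1 (M T), π j) / π i) := by
  have hi : 1 ≤ i := by omega
  have hwi : w i (T + 1) = π i * Real.exp (-η * ∑ t ∈ Icc 1 a, ℓ (xl t) (y t))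
      * Real.exp (-η * ∑ t ∈ Icc (a + 1) T, ℓ (xe i t) (y t)) := by
    have h := hG.weight_add_eq hM hi (Nat.le_add_left 1 a) hia (T - a)
    rwa [show a + 1 + (T - a) = T + 1 by omega, Ico_add_one_right_eq_Icc,
      hG.weight_entry a i hai hia] at h
  have hmass : Real.exp (η * ∑ t ∈ Icc 1 T, ℓ (xl t) (y t)) * w i (T + 1)
      ≤ ∑ j ∈ Icc 1 (M T), π j := by
    refine le_trans ?_ (hG.potential_le hexp hη hM0 hM hπ hxe T)
    gcongr
    exact single_le_sum (f := fun j => w j (T + 1))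
      (fun j hj => hG.weight_nonneg hM0 hπ T j (mem_Icc.1 hj).1
        ((mem_Icc.1 hj).2.trans (hM T.le_succ))) (mem_Icc.2 ⟨hi, hia.trans (hM haT)⟩)
  refine le_one_div_mul_log_div_of_mul_exp_le hη hπi (le_of_eq_of_le ?_ hmass)
  rw [hwi, ← sum_Icc_one_add_sum_Icc _ haT.le, sum_sub_distrib]
  simp only [mul_sub, mul_add, Real.exp_sub, Real.exp_add, neg_mul, Real.exp_neg]
  field_simp

end IsGrowingHedge

theorem growingHedge_regret_entry_time_prior_general
    {E : Type*} [AddCommGroup E] [Module ℝ E] {Y : Type*}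
    (X : Set E) (ℓ : E → Y → ℝ) (η : ℝ) (hη : 0 < η)
    (hexp : ∀ (yy : Y) (N : ℕ), 1 ≤ N → ∀ xs : Fin N → E, (∀ i, xs i ∈ X) →
      ∀ vv : Fin N → ℝ, (∀ i, 0 ≤ vv i) → (∑ i, vv i) = 1 →
      ℓ (∑ i, vv i • xs i) yy ≤ -(1/η) * Real.log (∑ i, vv i * Real.exp (-η * ℓ (xs i) yy)))
    -- growing expert ensemble: M t experts at time t, nondecreasing, at least one
    (M : ℕ → ℕ) (hM0 : M 0 = 0) (hMmono : Monotone M)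
    -- m t = M t − M (t−1) is the number of experts entering at time t
    (m : ℕ → ℕ) (hm : ∀ t, 1 ≤ t → m t = M t - M (t-1))
    -- τ i is the entry time of expert i : the least t ≥ 1 with i ≤ M t
    (τ : ℕ → ℕ)
    (hτ : ∀ i t, 1 ≤ i → 1 ≤ t → i ≤ M t → 1 ≤ τ i ∧ i ≤ M (τ i) ∧ τ i ≤ t)
    -- the prior weights π_i = 1/(τ_i · m_{τ_i})
    (π : ℕ → ℝ) (hπdef : ∀ i, 1 ≤ i → π i = 1 / ((τ i : ℝ) * (m (τ i) : ℝ)))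
    (xe : ℕ → ℕ → E) (hxe : ∀ i t, 1 ≤ t → 1 ≤ i → i ≤ M t → xe i t ∈ X)
    (y : ℕ → Y) (xl : ℕ → E) (w : ℕ → ℕ → ℝ)
    -- GrowingHedge weights: initialization, update, introduction of new experts
    (hw1 : ∀ i, 1 ≤ i → i ≤ M 1 → w i 1 = π i)
    (hwupd : ∀ t, 1 ≤ t → ∀ i, 1 ≤ i → i ≤ M t →
      w i (t+1) = w i t * Real.exp (-η * ℓ (xe i t) (y t)))
    (hwnew : ∀ t, 1 ≤ t → ∀ i, M t + 1 ≤ i → i ≤ M (t+1) →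
      w i (t+1) = π i * Real.exp (-η * ∑ s ∈ Finset.Icc 1 t, ℓ (xl s) (y s)))
    -- GrowingHedge prediction
    (hxl : ∀ t, 1 ≤ t → xl t =
      (∑ i ∈ Finset.Icc 1 (M t), w i t)⁻¹ •
        ∑ i ∈ Finset.Icc 1 (M t), w i t • xe i t) :
    ∀ T : ℕ, 1 ≤ T → ∀ i : ℕ, 1 ≤ i → i ≤ M T →
      ∑ t ∈ Finset.Icc (τ i) T, (ℓ (xl t) (y t) - ℓ (xe i t) (y t))
        ≤ (1/η) * Real.log (m (τ i) : ℝ) + (1/η) * Real.log (τ i : ℝ)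
          + (1/η) * Real.log (1 + Real.log (T : ℝ)) := by
  intro T hT i hi hiT
  have hπ : ∀ j, 1 ≤ j → 0 ≤ π j := fun j hj => by rw [hπdef j hj]; positivity
  have hwentry : ∀ t j, M t < j → j ≤ M (t + 1) →
      w j (t + 1) = π j * Real.exp (-η * ∑ s ∈ Icc 1 t, ℓ (xl s) (y s)) := by
    rintro (_ | t) j hj hjM
    · simp [hw1 j (by omega) hjM]
    · exact hwnew (t + 1) (by omega) j hj hjM
  obtain ⟨hτ1, hiτ, hτT⟩ := hτ i T hi hT hiT
  have hbefore : M (τ i - 1) < i := IsEntryTime.apply_pred_lt hτ hM0 hi hT hiT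
  have hmτ : 1 ≤ m (τ i) := by rw [hm _ hτ1]; omega
  have hπi : 0 < π i := by rw [hπdef i hi]; positivity
  have hG : IsGrowingHedge ℓ η M π xe y xl w := ⟨hwupd, hwentry, hxl⟩
  have hregret := hG.regret_le_log hexp hη hM0 hMmono hπ hxe (T := T) hπi
    hbefore (by rwa [Nat.sub_add_cancel hτ1]) (by omega)
  rw [Nat.sub_add_cancel hτ1] at hregret
  have hmass := (IsEntryTime.sum_prior_le_harmonic hτ hM0 hMmono hm hπdef T).trans
    (harmonic_le_one_add_log T)
  have hmass_pos : 0 < ∑ j ∈ Icc 1 (M T), π j :=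
    hπi.trans_le (single_le_sum (fun j hj => hπ j (mem_Icc.1 hj).1) (mem_Icc.2 ⟨hi, hiT⟩))
  refine hregret.trans ?_
  have hτ0 : (τ i : ℝ) ≠ 0 := by positivity
  have hm0 : (m (τ i) : ℝ) ≠ 0 := by positivity
  rw [hπdef i hi, div_div_eq_mul_div, div_one, Real.log_mul hmass_pos.ne' (mul_ne_zero hτ0 hm0),
    Real.log_mul hτ0 hm0]
  have hlog := mul_le_mul_of_nonneg_left (Real.log_le_log hmass_pos hmass)
    (one_div_pos.2 hη).le
  linarith

/-- **GrowingHedge with prior π_i = 1/(τ_i · m_{τ_i}) (bound (2) of the overview).**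
For every T ≥ 1 and every expert i ≤ M_T,
Σ_{t=τ_i}^T (ℓ_t − ℓ_{i,t}) ≤ (1/η) log m_{τ_i} + (1/η) log τ_i + (1/η) log(1 + log T). -/
theorem growingHedge_regret_entry_time_prior
    {E : Type*} [AddCommGroup E] [Module ℝ E] {Y : Type*}
    (X : Set E) (ℓ : E → Y → ℝ) (η : ℝ) (hη : 0 < η)
    (hexp : ∀ (yy : Y) (N : ℕ), 1 ≤ N → ∀ xs : Fin N → E, (∀ i, xs i ∈ X) →
      ∀ vv : Fin N → ℝ, (∀ i, 0 ≤ vv i) → (∑ i, vv i) = 1 →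
      ℓ (∑ i, vv i • xs i) yy ≤ -(1/η) * Real.log (∑ i, vv i * Real.exp (-η * ℓ (xs i) yy)))
    -- growing expert ensemble: M t experts at time t, nondecreasing, at least one
    (M : ℕ → ℕ) (hM0 : M 0 = 0) (hMpos : ∀ t, 1 ≤ t → 1 ≤ M t) (hMmono : Monotone M)
    -- m t = M t − M (t−1) is the number of experts entering at time t
    (m : ℕ → ℕ) (hm : ∀ t, 1 ≤ t → m t = M t - M (t-1))
    -- τ i is the entry time of expert i : the least t ≥ 1 with i ≤ M t
    (τ : ℕ → ℕ)
    (hτ : ∀ i t, 1 ≤ i → 1 ≤ t → i ≤ M t → 1 ≤ τ i ∧ i ≤ M (τ i) ∧ τ i ≤ t)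
    -- the prior weights π_i = 1/(τ_i · m_{τ_i})
    (π : ℕ → ℝ) (hπdef : ∀ i, 1 ≤ i → π i = 1 / ((τ i : ℝ) * (m (τ i) : ℝ)))
    (xe : ℕ → ℕ → E) (hxe : ∀ i t, 1 ≤ t → 1 ≤ i → i ≤ M t → xe i t ∈ X)
    (y : ℕ → Y) (xl : ℕ → E) (w : ℕ → ℕ → ℝ)
    -- GrowingHedge weights: initialization, update, introduction of new experts
    (hw1 : ∀ i, 1 ≤ i → i ≤ M 1 → w i 1 = π i)
    (hwupd : ∀ t, 1 ≤ t → ∀ i, 1 ≤ i → i ≤ M t →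
      w i (t+1) = w i t * Real.exp (-η * ℓ (xe i t) (y t)))
    (hwnew : ∀ t, 1 ≤ t → ∀ i, M t + 1 ≤ i → i ≤ M (t+1) →
      w i (t+1) = π i * Real.exp (-η * ∑ s ∈ Finset.Icc 1 t, ℓ (xl s) (y s)))
    -- GrowingHedge prediction
    (hxl : ∀ t, 1 ≤ t → xl t =
      (∑ i ∈ Finset.Icc 1 (M t), w i t)⁻¹ •
        ∑ i ∈ Finset.Icc 1 (M t), w i t • xe i t) :
    ∀ T : ℕ, 1 ≤ T → ∀ i : ℕ, 1 ≤ i → i ≤ M T →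
      ∑ t ∈ Finset.Icc (τ i) T, (ℓ (xl t) (y t) - ℓ (xe i t) (y t))
        ≤ (1/η) * Real.log (m (τ i) : ℝ) + (1/η) * Real.log (τ i : ℝ)
          + (1/η) * Real.log (1 + Real.log (T : ℝ)) :=
  growingHedge_regret_entry_time_prior_general X ℓ η hη hexp M hM0 hMmono m hm τ hτ π hπdef xe hxe y
    xl w hw1 hwupd hwnew hxl
end

section
/- The GrowingHedge algorithm with positive weights π achieves, for every T ≥ 1 and every sequence of fresh experts i^T = (i_1,…,i_T) with switching times σ_1 < … < σ_k (with conventions σ_0 = 1 and σ_{k+1} = T + 1), the cumulative regret bound L_T − L_T(i^T) = Σ_{j=0}^k Σ_{t=σ_j}^{σ_{j+1}−1} (ℓ_t − ℓ_{i_{σ_j},t}) ≤ (1/η) Σ_{j=0}^k log( Π_{M_{σ_{j+1}−1}} / π_{i_{σ_j}} ), where Π_M = Σ_{i=1}^M π_i. -/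
private lemma sum_fin_icc {A : Type*} [AddCommMonoid A] (n : ℕ) (f : ℕ → A) :
    ∑ i : Fin n, f (i.1 + 1) = ∑ i ∈ Finset.Icc 1 n, f i := by
  rw [Fin.sum_univ_eq_sum_range (fun i => f (i+1)),
    show Finset.Icc 1 n = Finset.Ico 1 (n+1) by rw [Finset.Ico_add_one_right_eq_Icc],
    Finset.sum_Ico_eq_sum_range]
  simp [Nat.add_comm]

private lemma sum_blocks (f : ℕ → ℝ) (g : ℕ → ℕ) (hg : Monotone g) (n : ℕ) :
    ∑ j ∈ Finset.range n, ∑ t ∈ Finset.Ico (g j) (g (j+1)), f t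
      = ∑ t ∈ Finset.Ico (g 0) (g n), f t := by
  induction n with
  | zero => simp
  | succ n ih =>
      rw [Finset.sum_range_succ, ih,
        Finset.sum_Ico_consecutive f (hg (Nat.zero_le n)) (hg (Nat.le_succ n))]



/-- **GrowingHedge against sequences of fresh experts (bound (9)).**
For every T ≥ 1 and every sequence of fresh experts i^T with switching times
σ_1 < … < σ_k (conventions σ_0 = 1, σ_{k+1} = T+1), GrowingHedge achieves
L_T − L_T(i^T) = Σ_{j=0}^k Σ_{t=σ_j}^{σ_{j+1}−1} (ℓ_t − ℓ_{i_{σ_j},t})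
               ≤ (1/η) Σ_{j=0}^k log( Π_{M_{σ_{j+1}−1}} / π_{i_{σ_j}} ),
where Π_M = Σ_{i=1}^M π_i. -/
theorem growingHedge_fresh_sequences_regret
    {E : Type*} [AddCommGroup E] [Module ℝ E] {Y : Type*}
    (X : Set E) (ℓ : E → Y → ℝ) (η : ℝ) (hη : 0 < η)
    (hexp : ∀ (yy : Y) (N : ℕ), 1 ≤ N → ∀ xs : Fin N → E, (∀ i, xs i ∈ X) →
      ∀ vv : Fin N → ℝ, (∀ i, 0 ≤ vv i) → (∑ i, vv i) = 1 →
      ℓ (∑ i, vv i • xs i) yy ≤ -(1/η) * Real.log (∑ i, vv i * Real.exp (-η * ℓ (xs i) yy)))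
    -- growing expert ensemble
    (M : ℕ → ℕ) (hMpos : ∀ t, 1 ≤ t → 1 ≤ M t) (hMmono : Monotone M)
    (π : ℕ → ℝ) (hπpos : ∀ i, 1 ≤ i → 0 < π i)
    (xe : ℕ → ℕ → E) (hxe : ∀ i t, 1 ≤ t → 1 ≤ i → i ≤ M t → xe i t ∈ X)
    (y : ℕ → Y) (xl : ℕ → E) (w : ℕ → ℕ → ℝ)
    -- GrowingHedge weights and prediction
    (hw1 : ∀ i, 1 ≤ i → i ≤ M 1 → w i 1 = π i)
    (hwupd : ∀ t, 1 ≤ t → ∀ i, 1 ≤ i → i ≤ M t →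
      w i (t+1) = w i t * Real.exp (-η * ℓ (xe i t) (y t)))
    (hwnew : ∀ t, 1 ≤ t → ∀ i, M t + 1 ≤ i → i ≤ M (t+1) →
      w i (t+1) = π i * Real.exp (-η * ∑ s ∈ Finset.Icc 1 t, ℓ (xl s) (y s)))
    (hxl : ∀ t, 1 ≤ t → xl t =
      (∑ i ∈ Finset.Icc 1 (M t), w i t)⁻¹ •
        ∑ i ∈ Finset.Icc 1 (M t), w i t • xe i t)
    -- horizon and comparison sequence of fresh experts
    (T : ℕ) (hT : 1 ≤ T)
    (iseq : ℕ → ℕ) (k : ℕ) (σ : ℕ → ℕ)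
    (hσ0 : σ 0 = 1) (hσlast : σ (k+1) = T + 1)
    (hσmono : ∀ j, j ≤ k → σ j < σ (j+1))
    -- admissibility: 1 ≤ i_t ≤ M_t
    (hadm : ∀ t, 1 ≤ t → t ≤ T → 1 ≤ iseq t ∧ iseq t ≤ M t)
    -- constant on each interval [σ_j, σ_{j+1} − 1]
    (hconst : ∀ j, j ≤ k → ∀ t, σ j ≤ t → t < σ (j+1) → iseq t = iseq (σ j))
    -- switches only to fresh experts
    (hfresh : ∀ j, 1 ≤ j → j ≤ k →
      M (σ j - 1) + 1 ≤ iseq (σ j) ∧ iseq (σ j) ≤ M (σ j)) :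
    ((∑ t ∈ Finset.Icc 1 T, ℓ (xl t) (y t)) - (∑ t ∈ Finset.Icc 1 T, ℓ (xe (iseq t) t) (y t))
      = ∑ j ∈ Finset.range (k+1), ∑ t ∈ Finset.Icc (σ j) (σ (j+1) - 1),
          (ℓ (xl t) (y t) - ℓ (xe (iseq (σ j)) t) (y t)))
    ∧ ((∑ t ∈ Finset.Icc 1 T, ℓ (xl t) (y t)) - (∑ t ∈ Finset.Icc 1 T, ℓ (xe (iseq t) t) (y t))
      ≤ (1/η) * ∑ j ∈ Finset.range (k+1),
          Real.log ((∑ i ∈ Finset.Icc 1 (M (σ (j+1) - 1)), π i) / π (iseq (σ j)))) := by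
    -- basic splitting helpers
  have hsplit : ∀ (f : ℕ → ℝ) (a b : ℕ), a ≤ b →
      ∑ i ∈ Finset.Icc 1 b, f i
        = (∑ i ∈ Finset.Icc 1 a, f i) + ∑ i ∈ Finset.Icc (a+1) b, f i := by
    intro f a b hab
    rw [show Finset.Icc 1 a = Finset.Ioc 0 a from Finset.Icc_add_one_left_eq_Ioc 0 a,
        show Finset.Icc 1 b = Finset.Ioc 0 b from Finset.Icc_add_one_left_eq_Ioc 0 b,
        show Finset.Icc (a+1) b = Finset.Ioc a b from Finset.Icc_add_one_left_eq_Ioc a b,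
        Finset.sum_Ioc_consecutive f (Nat.zero_le a) hab]
  have hLstep : ∀ t : ℕ, 1 ≤ t →
      ∑ s ∈ Finset.Icc 1 t, ℓ (xl s) (y s)
        = (∑ s ∈ Finset.Icc 1 (t-1), ℓ (xl s) (y s)) + ℓ (xl t) (y t) := by
    intro t ht
    obtain ⟨u, rfl⟩ : ∃ u, t = u + 1 := ⟨t - 1, by omega⟩
    rw [Finset.sum_Icc_succ_top (by omega : 1 ≤ u + 1)]
    simp
  -- weight positivity
  have hwpos : ∀ t, 1 ≤ t → ∀ i, 1 ≤ i → i ≤ M t → 0 < w i t := by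
    intro t
    induction t with
    | zero => omega
    | succ t ih =>
      intro _ i hi1 hiM
      by_cases ht : 1 ≤ t
      · by_cases hiMt : i ≤ M t
        · rw [hwupd t ht i hi1 hiMt]
          exact mul_pos (ih ht i hi1 hiMt) (Real.exp_pos _)
        · rw [hwnew t ht i (by omega) hiM]
          exact mul_pos (hπpos i hi1) (Real.exp_pos _)
      · have ht0 : t = 0 := by omega
        subst ht0
        rw [hw1 i hi1 hiM]
        exact hπpos i hi1
  have hWpos : ∀ t, 1 ≤ t → 0 < ∑ i ∈ Finset.Icc 1 (M t), w i t := by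
    intro t ht
    apply Finset.sum_pos _ (Finset.nonempty_Icc.mpr (hMpos t ht))
    intro i hi
    simp only [Finset.mem_Icc] at hi
    exact hwpos t ht i hi.1 hi.2
  -- mixability step
  have hmix : ∀ t, 1 ≤ t →
      ∑ i ∈ Finset.Icc 1 (M t), w i (t+1)
        ≤ (∑ i ∈ Finset.Icc 1 (M t), w i t) * Real.exp (-η * ℓ (xl t) (y t)) := by
    intro t ht
    have hWtpos : 0 < ∑ i ∈ Finset.Icc 1 (M t), w i t := hWpos t ht
    have hN : 1 ≤ M t := hMpos t ht
    set Wt := ∑ i ∈ Finset.Icc 1 (M t), w i t with hWt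
    have hvsum : (∑ i : Fin (M t), w (i.1+1) t / Wt) = 1 := by
      rw [sum_fin_icc (M t) (fun i => w i t / Wt), ← Finset.sum_div, ← hWt,
        div_self hWtpos.ne']
    have hxeq : (∑ i : Fin (M t), (w (i.1+1) t / Wt) • xe (i.1+1) t) = xl t := by
      rw [hxl t ht,
        show (∑ i : Fin (M t), (w (i.1+1) t / Wt) • xe (i.1+1) t)
            = ∑ i ∈ Finset.Icc 1 (M t), (w i t / Wt) • xe i t from
          sum_fin_icc (M t) (fun i => (w i t / Wt) • xe i t),
        ← hWt, Finset.smul_sum]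
      apply Finset.sum_congr rfl
      intro i _
      rw [div_eq_inv_mul, mul_smul]
    have key := hexp (y t) (M t) hN (fun i => xe (i.1+1) t)
      (fun i => hxe (i.1+1) t ht (by omega) i.isLt)
      (fun i => w (i.1+1) t / Wt)
      (fun i => div_nonneg (hwpos t ht (i.1+1) (by omega) i.isLt).le hWtpos.le)
      hvsum
    rw [hxeq] at key
    set S := ∑ i : Fin (M t), (w (i.1+1) t / Wt) * Real.exp (-η * ℓ (xe (i.1+1) t) (y t)) with hS
    have hSeq : S = (∑ i ∈ Finset.Icc 1 (M t), w i (t+1)) / Wt := by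
      have hterm : ∀ i ∈ Finset.Icc 1 (M t),
          (w i t / Wt) * Real.exp (-η * ℓ (xe i t) (y t)) = w i (t+1) / Wt := by
        intro i hi
        simp only [Finset.mem_Icc] at hi
        rw [hwupd t ht i hi.1 hi.2, div_mul_eq_mul_div]
      rw [hS, sum_fin_icc (M t) (fun i => (w i t / Wt) * Real.exp (-η * ℓ (xe i t) (y t))),
        Finset.sum_congr rfl hterm, ← Finset.sum_div]
    have hSpos : 0 < S := by
      rw [hSeq]
      apply div_pos _ hWtpos
      apply Finset.sum_pos _ (Finset.nonempty_Icc.mpr hN)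
      intro i hi
      simp only [Finset.mem_Icc] at hi
      exact hwpos (t+1) (by omega) i hi.1 (le_trans hi.2 (hMmono (Nat.le_succ t)))
    have hlog : Real.log S ≤ -η * ℓ (xl t) (y t) := by
      have h := mul_le_mul_of_nonneg_left key hη.le
      rw [show η * (-(1/η) * Real.log S) = -Real.log S by field_simp <;> ring] at h
      linarith
    have hSle : S ≤ Real.exp (-η * ℓ (xl t) (y t)) := by
      rw [← Real.exp_log hSpos]
      exact Real.exp_le_exp.mpr hlog
    rw [hSeq] at hSle
    calc ∑ i ∈ Finset.Icc 1 (M t), w i (t+1)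
        = (∑ i ∈ Finset.Icc 1 (M t), w i (t+1)) / Wt * Wt := by field_simp
      _ ≤ Real.exp (-η * ℓ (xl t) (y t)) * Wt :=
          mul_le_mul_of_nonneg_right hSle hWtpos.le
      _ = Wt * Real.exp (-η * ℓ (xl t) (y t)) := mul_comm _ _
  -- global invariant
  have hinv : ∀ t, 1 ≤ t →
      (∑ i ∈ Finset.Icc 1 (M t), w i t)
        ≤ (∑ i ∈ Finset.Icc 1 (M t), π i)
            * Real.exp (-η * ∑ s ∈ Finset.Icc 1 (t-1), ℓ (xl s) (y s)) := by
    intro t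
    induction t with
    | zero => omega
    | succ t ih =>
      intro _
      by_cases ht : 1 ≤ t
      · have hMle : M t ≤ M (t+1) := hMmono (Nat.le_succ t)
        have e1 := hsplit (fun i => w i (t+1)) (M t) (M (t+1)) hMle
        have e2 : ∑ i ∈ Finset.Icc (M t + 1) (M (t+1)), w i (t+1)
            = (∑ i ∈ Finset.Icc (M t + 1) (M (t+1)), π i)
                * Real.exp (-η * ∑ s ∈ Finset.Icc 1 t, ℓ (xl s) (y s)) := by
          rw [Finset.sum_mul]
          apply Finset.sum_congr rfl
          intro i hi
          simp only [Finset.mem_Icc] at hi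
          exact hwnew t ht i hi.1 hi.2
        have e5 : (∑ i ∈ Finset.Icc 1 (M t), w i t) * Real.exp (-η * ℓ (xl t) (y t))
            ≤ (∑ i ∈ Finset.Icc 1 (M t), π i)
                * Real.exp (-η * ∑ s ∈ Finset.Icc 1 t, ℓ (xl s) (y s)) := by
          have h := mul_le_mul_of_nonneg_right (ih ht) (Real.exp_pos (-η * ℓ (xl t) (y t))).le
          rw [mul_assoc, ← Real.exp_add,
            show -η * ∑ s ∈ Finset.Icc 1 (t-1), ℓ (xl s) (y s) + -η * ℓ (xl t) (y t)
              = -η * ∑ s ∈ Finset.Icc 1 t, ℓ (xl s) (y s) by rw [hLstep t ht]; ring] at h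
          exact h
        have e6 := hsplit π (M t) (M (t+1)) hMle
        rw [show (t+1)-1 = t from rfl, e1, e6, add_mul]
        exact add_le_add (le_trans (hmix t ht) e5) e2.le
      · have ht0 : t = 0 := by omega
        subst ht0
        have e : ∑ i ∈ Finset.Icc 1 (M 1), w i 1 = ∑ i ∈ Finset.Icc 1 (M 1), π i := by
          apply Finset.sum_congr rfl
          intro i hi
          simp only [Finset.mem_Icc] at hi
          exact hw1 i hi.1 hi.2
        simp [e]
  -- comparator weight within a segment
  have hseg : ∀ s i, 1 ≤ s → 1 ≤ i →
      w i s = π i * Real.exp (-η * ∑ r ∈ Finset.Icc 1 (s-1), ℓ (xl r) (y r)) →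
      ∀ u, s ≤ u → (∀ r, s ≤ r → r ≤ u → i ≤ M r) →
      w i (u+1) = π i * Real.exp (-η * ((∑ r ∈ Finset.Icc 1 (s-1), ℓ (xl r) (y r))
        + ∑ r ∈ Finset.Icc s u, ℓ (xe i r) (y r))) := by
    intro s i hs hi hws u hsu
    induction u, hsu using Nat.le_induction with
    | base =>
      intro hM
      rw [hwupd s hs i hi (hM s le_rfl le_rfl), hws, Finset.Icc_self,
        Finset.sum_singleton, mul_assoc, ← Real.exp_add]
      congr 2
      ring
    | succ u hu ih =>
      intro hM
      rw [hwupd (u+1) (by omega) i hi (hM (u+1) (by omega) le_rfl),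
        ih (fun r h1 h2 => hM r h1 (by omega)),
        Finset.sum_Icc_succ_top (by omega : s ≤ u + 1), mul_assoc, ← Real.exp_add]
      congr 2
      ring
  -- sigma is monotone up to k+1
  have hσle : ∀ a b : ℕ, a ≤ b → b ≤ k + 1 → σ a ≤ σ b := by
    intro a b
    induction b with
    | zero =>
      intro hab _
      have ha : a = 0 := by omega
      subst ha
      exact le_rfl
    | succ b ih =>
      intro hab hbk
      rcases Nat.eq_or_lt_of_le hab with rfl | h
      · exact le_rfl
      · exact le_trans (ih (by omega) (by omega)) (le_of_lt (hσmono b (by omega)))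
  -- the partition equality
  have hIcoIcc : ∀ j, j ≤ k → Finset.Icc (σ j) (σ (j+1) - 1) = Finset.Ico (σ j) (σ (j+1)) := by
    intro j hj
    have h1 : 1 ≤ σ (j+1) := by
      have h0 : σ 0 ≤ σ (j+1) := hσle 0 (j+1) (by omega) (by omega)
      omega
    rw [← Finset.Ico_add_one_right_eq_Icc]
    congr 1
    omega
  have hgmono : Monotone (fun j => σ (min j (k+1))) := by
    apply monotone_nat_of_le_succ
    intro j
    exact hσle (min j (k+1)) (min (j+1) (k+1)) (by omega) (by omega)
  have heq : (∑ t ∈ Finset.Icc 1 T, ℓ (xl t) (y t))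
        - (∑ t ∈ Finset.Icc 1 T, ℓ (xe (iseq t) t) (y t))
      = ∑ j ∈ Finset.range (k+1), ∑ t ∈ Finset.Icc (σ j) (σ (j+1) - 1),
          (ℓ (xl t) (y t) - ℓ (xe (iseq (σ j)) t) (y t)) := by
    have h1 : ∀ j ∈ Finset.range (k+1),
        ∑ t ∈ Finset.Icc (σ j) (σ (j+1) - 1),
            (ℓ (xl t) (y t) - ℓ (xe (iseq (σ j)) t) (y t))
          = ∑ t ∈ Finset.Ico (σ (min j (k+1))) (σ (min (j+1) (k+1))),
            (ℓ (xl t) (y t) - ℓ (xe (iseq t) t) (y t)) := by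
      intro j hj
      have hjk : j ≤ k := by
        have := Finset.mem_range.mp hj; omega
      rw [show min j (k+1) = j by omega, show min (j+1) (k+1) = j+1 by omega,
        hIcoIcc j hjk]
      apply Finset.sum_congr rfl
      intro t ht
      simp only [Finset.mem_Ico] at ht
      rw [hconst j hjk t ht.1 ht.2]
    rw [Finset.sum_congr rfl h1,
      sum_blocks (fun t => ℓ (xl t) (y t) - ℓ (xe (iseq t) t) (y t))
        (fun j => σ (min j (k+1))) hgmono (k+1)]
    simp only [Nat.min_self, Nat.zero_min, hσ0, hσlast, min_eq_left (Nat.zero_le (k+1))]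
    rw [Finset.Ico_add_one_right_eq_Icc, Finset.sum_sub_distrib]
  -- per-block regret bound
  have hPipos : ∀ m : ℕ, 1 ≤ m → 0 < ∑ i ∈ Finset.Icc 1 m, π i := by
    intro m hm
    apply Finset.sum_pos _ (Finset.nonempty_Icc.mpr hm)
    intro i hi
    simp only [Finset.mem_Icc] at hi
    exact hπpos i hi.1
  have hblock : ∀ j, j ≤ k →
      ∑ t ∈ Finset.Icc (σ j) (σ (j+1) - 1),
          (ℓ (xl t) (y t) - ℓ (xe (iseq (σ j)) t) (y t))
        ≤ 1/η * Real.log ((∑ i ∈ Finset.Icc 1 (M (σ (j+1) - 1)), π i) / π (iseq (σ j))) := by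
    intro j hj
    have hs1 : 1 ≤ σ j := by
      have := hσle 0 j (Nat.zero_le j) (by omega); omega
    have hse : σ j ≤ σ (j+1) - 1 := by
      have := hσmono j hj; omega
    have heT : σ (j+1) - 1 ≤ T := by
      have := hσle (j+1) (k+1) (by omega) le_rfl; omega
    have hi := hadm (σ j) hs1 (le_trans hse heT)
    have hiM : ∀ r, σ j ≤ r → r ≤ σ (j+1) - 1 → iseq (σ j) ≤ M r :=
      fun r h1 _ => le_trans hi.2 (hMmono h1)
    have hstart : w (iseq (σ j)) (σ j)
        = π (iseq (σ j)) * Real.exp (-η * ∑ r ∈ Finset.Icc 1 (σ j - 1), ℓ (xl r) (y r)) := by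
      rcases Nat.eq_zero_or_pos j with rfl | hjpos
      · rw [hσ0]
        rw [hw1 (iseq 1) (by rw [hσ0] at hi; exact hi.1) (by rw [hσ0] at hi; exact hi.2)]
        norm_num
      · have hf := hfresh j hjpos hj
        have h2s : 2 ≤ σ j := by
          have h01 : σ 0 < σ 1 := hσmono 0 (by omega)
          have h1j : σ 1 ≤ σ j := hσle 1 j hjpos (by omega)
          omega
        have hnew := hwnew (σ j - 1) (by omega) (iseq (σ j)) hf.1
          (by rw [Nat.sub_add_cancel (by omega)]; exact hf.2)
        rw [Nat.sub_add_cancel (by omega)] at hnew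
        exact hnew
    have hfinal := hseg (σ j) (iseq (σ j)) hs1 hi.1 hstart (σ (j+1) - 1) hse hiM
    set e := σ (j+1) - 1 with he
    have he1 : 1 ≤ e := le_trans hs1 hse
    have hub : w (iseq (σ j)) (e+1)
        ≤ (∑ i ∈ Finset.Icc 1 (M e), π i) * Real.exp (-η * ∑ r ∈ Finset.Icc 1 e, ℓ (xl r) (y r)) := by
      have h1 : w (iseq (σ j)) (e+1) ≤ ∑ i ∈ Finset.Icc 1 (M e), w i (e+1) := by
        apply Finset.single_le_sum (f := fun i => w i (e+1))
        · intro i' hi'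
          simp only [Finset.mem_Icc] at hi'
          exact (hwpos (e+1) (by omega) i' hi'.1
            (le_trans hi'.2 (hMmono (Nat.le_succ e)))).le
        · exact Finset.mem_Icc.mpr ⟨hi.1, hiM e hse le_rfl⟩
      have h2 := hmix e he1
      have h3 := mul_le_mul_of_nonneg_right (hinv e he1)
        (Real.exp_pos (-η * ℓ (xl e) (y e))).le
      rw [mul_assoc, ← Real.exp_add,
        show -η * ∑ s ∈ Finset.Icc 1 (e-1), ℓ (xl s) (y s) + -η * ℓ (xl e) (y e)
          = -η * ∑ s ∈ Finset.Icc 1 e, ℓ (xl s) (y s) by rw [hLstep e he1]; ring] at h3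
      exact le_trans h1 (le_trans h2 h3)
    rw [hfinal] at hub
    -- extract the log inequality
    have hπi : 0 < π (iseq (σ j)) := hπpos _ hi.1
    have hPie : 0 < ∑ i ∈ Finset.Icc 1 (M e), π i := hPipos (M e) (hMpos e he1)
    have hratio : 0 < (∑ i ∈ Finset.Icc 1 (M e), π i) / π (iseq (σ j)) := div_pos hPie hπi
    have hexpineq : Real.exp (-η * ((∑ r ∈ Finset.Icc 1 (σ j - 1), ℓ (xl r) (y r))
          + ∑ r ∈ Finset.Icc (σ j) e, ℓ (xe (iseq (σ j)) r) (y r)))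
        ≤ Real.exp (Real.log ((∑ i ∈ Finset.Icc 1 (M e), π i) / π (iseq (σ j)))
            + -η * ∑ r ∈ Finset.Icc 1 e, ℓ (xl r) (y r)) := by
      rw [Real.exp_add, Real.exp_log hratio, div_mul_eq_mul_div, le_div_iff₀ hπi]
      nlinarith [hub]
    have hlin := Real.exp_le_exp.mp hexpineq
    -- block sum identity
    have hsum : ∑ t ∈ Finset.Icc (σ j) e, ℓ (xl t) (y t)
        = (∑ r ∈ Finset.Icc 1 e, ℓ (xl r) (y r))
          - ∑ r ∈ Finset.Icc 1 (σ j - 1), ℓ (xl r) (y r) := by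
      have := hsplit (fun r => ℓ (xl r) (y r)) (σ j - 1) e (by omega)
      rw [show σ j - 1 + 1 = σ j by omega] at this
      linarith
    rw [Finset.sum_sub_distrib, hsum]
    have h2 : η * (((∑ r ∈ Finset.Icc 1 e, ℓ (xl r) (y r))
          - ∑ r ∈ Finset.Icc 1 (σ j - 1), ℓ (xl r) (y r))
          - ∑ t ∈ Finset.Icc (σ j) e, ℓ (xe (iseq (σ j)) t) (y t))
        ≤ Real.log ((∑ i ∈ Finset.Icc 1 (M e), π i) / π (iseq (σ j))) := by
      nlinarith [hlin]
    calc ((∑ r ∈ Finset.Icc 1 e, ℓ (xl r) (y r))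
          - ∑ r ∈ Finset.Icc 1 (σ j - 1), ℓ (xl r) (y r))
          - ∑ t ∈ Finset.Icc (σ j) e, ℓ (xe (iseq (σ j)) t) (y t)
        = 1/η * (η * (((∑ r ∈ Finset.Icc 1 e, ℓ (xl r) (y r))
          - ∑ r ∈ Finset.Icc 1 (σ j - 1), ℓ (xl r) (y r))
          - ∑ t ∈ Finset.Icc (σ j) e, ℓ (xe (iseq (σ j)) t) (y t))) := by
          field_simp
      _ ≤ 1/η * Real.log ((∑ i ∈ Finset.Icc 1 (M e), π i) / π (iseq (σ j))) :=
          mul_le_mul_of_nonneg_left h2 (by positivity)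
  refine ⟨heq, ?_⟩
  rw [heq, Finset.mul_sum]
  apply Finset.sum_le_sum
  intro j hj
  exact hblock j (by have := Finset.mem_range.mp hj; omega)
end

section
/- For every T ≥ 1, the forecasts of the MarkovHedge algorithm at times 1,…,T coincide with those of the exponentially weighted aggregation of finite sequences of experts i^T = (i_1,…,i_T) under the Markov prior π^T(i_1,…,i_T) = θ_1(i_1) · θ_2(i_2 | i_1) ⋯ θ_T(i_T | i_{T−1}), where the sequence-expert i^T predicts x_t(i^T) = x_{i_t,t} at time t and the exponentially weighted aggregation of sequences predicts x_t = (Σ_{i^T} π^T(i^T) exp(−η L_{t−1}(i^T)) x_t(i^T)) / (Σ_{i^T} π^T(i^T) exp(−η L_{t−1}(i^T))), with L_{t−1}(i^T) = Σ_{s≤t−1} ℓ_{i_s,s}. -/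
open Finset

lemma aux_update_bij {N M : ℕ} (c : Fin N) (F : (Fin N → Fin M) → ℝ) (i j : Fin M) :
    ∑ s ∈ univ.filter (fun s : Fin N → Fin M => s c = j), F (Function.update s c i)
      = ∑ s ∈ univ.filter (fun s : Fin N → Fin M => s c = i), F s := by
  apply Finset.sum_nbij' (i := fun s => Function.update s c i)
    (j := fun s => Function.update s c j)
  · intro a ha; simp
  · intro a ha; simp
  · intro a ha; simp at ha; funext x
    by_cases h : x = c
    · subst h; simp [Function.update, ← ha]
    · simp [h, Function.update]
  · intro a ha; simp at ha; funext x
    by_cases h : x = c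
    · subst h; simp [Function.update, ← ha]
    · simp [h, Function.update]
  · intro a ha; rfl

lemma aux_sum_eliminate {N M : ℕ} (c : Fin N) (F : (Fin N → Fin M) → Fin M → ℝ)
    (hF : ∀ s j i, F (Function.update s c j) i = F s i) :
    ∑ s : Fin N → Fin M, ∑ i, F s i = (M:ℝ) * ∑ s : Fin N → Fin M, F s (s c) := by
  have h1 : ∑ s : Fin N → Fin M, F s (s c)
      = ∑ i, ∑ s ∈ univ.filter (fun s : Fin N → Fin M => s c = i), F s i := by
    rw [← Finset.sum_fiberwise univ (fun s : Fin N → Fin M => s c) (fun s => F s (s c))]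
    refine Finset.sum_congr rfl fun i _ => Finset.sum_congr rfl fun s hs => ?_
    simp at hs; rw [hs]
  have h2 : ∀ i, ∑ s : Fin N → Fin M, F s i
      = (M:ℝ) * ∑ s ∈ univ.filter (fun s : Fin N → Fin M => s c = i), F s i := by
    intro i
    rw [← Finset.sum_fiberwise univ (fun s : Fin N → Fin M => s c) (fun s => F s i)]
    have : ∀ j, ∑ s ∈ univ.filter (fun s : Fin N → Fin M => s c = j), F s i
        = ∑ s ∈ univ.filter (fun s : Fin N → Fin M => s c = i), F s i := by
      intro j
      rw [← aux_update_bij c (fun s => F s i) i j]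
      exact Finset.sum_congr rfl fun s _ => (hF s i i).symm
    rw [Finset.sum_congr rfl (fun j _ => this j), Finset.sum_const, Finset.card_univ,
      Fintype.card_fin, nsmul_eq_mul]
  rw [Finset.sum_comm, Finset.sum_congr rfl (fun i _ => h2 i), ← Finset.mul_sum, h1]



/-- The expert used at round `t ∈ {1, …, T}` by the finite sequence of experts
`s : Fin T → Fin M` (round `t` corresponds to index `t − 1`). -/
def seqAt {M T : ℕ} (hT : 0 < T) (s : Fin T → Fin M) (t : ℕ) : Fin M :=
  s ⟨(t - 1) % T, Nat.mod_lt _ hT⟩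

/-- **MarkovHedge = exponentially weighted aggregation of sequences of experts (Lemma 1).**
For every T ≥ 1, the forecasts of MarkovHedge at times 1,…,T coincide with those of the
exponentially weighted aggregation of finite sequences of experts under the Markov prior
π^T(i_1,…,i_T) = θ_1(i_1) θ_2(i_2|i_1) ⋯ θ_T(i_T|i_{T−1}). -/
theorem markovHedge_eq_sequence_aggregation
    {E : Type*} [AddCommGroup E] [Module ℝ E] {Y : Type*}
    (X : Set E) (ℓ : E → Y → ℝ) (η : ℝ) (hη : 0 < η)
    (hexp : ∀ (yy : Y) (N : ℕ), 1 ≤ N → ∀ xs : Fin N → E, (∀ i, xs i ∈ X) →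
      ∀ vv : Fin N → ℝ, (∀ i, 0 ≤ vv i) → (∑ i, vv i) = 1 →
      ℓ (∑ i, vv i • xs i) yy ≤ -(1/η) * Real.log (∑ i, vv i * Real.exp (-η * ℓ (xs i) yy)))
    (M : ℕ) (hM : 1 ≤ M)
    -- initial distribution θ_1 and stochastic transition matrices θ_t(i | j), t ≥ 2
    (θ1 : Fin M → ℝ) (hθ1pos : ∀ i, 0 ≤ θ1 i) (hθ1sum : ∑ i, θ1 i = 1)
    (θ : ℕ → Fin M → Fin M → ℝ)
    (hθpos : ∀ t, 2 ≤ t → ∀ i j, 0 ≤ θ t i j)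
    (hθsum : ∀ t, 2 ≤ t → ∀ j, ∑ i, θ t i j = 1)
    (xe : Fin M → ℕ → E) (hxe : ∀ i t, xe i t ∈ X) (y : ℕ → Y)
    -- MarkovHedge weights: v_1 = θ_1, posterior, then mixing by θ_{t+1}
    (v : ℕ → Fin M → ℝ)
    (hv1 : ∀ i, v 1 i = θ1 i)
    (hvupd : ∀ t, 1 ≤ t → ∀ i, v (t+1) i =
      ∑ j, θ (t+1) i j *
        (v t j * Real.exp (-η * ℓ (xe j t) (y t)) /
          ∑ j', v t j' * Real.exp (-η * ℓ (xe j' t) (y t)))) :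
    ∀ T : ℕ, ∀ hT : 0 < T, ∀ t : ℕ, 1 ≤ t → t ≤ T →
      -- the MarkovHedge forecast at time t …
      (∑ i, v t i • xe i t)
        -- … equals the exponentially weighted aggregation of sequences forecast
        = (∑ s : Fin T → Fin M,
              (θ1 (seqAt hT s 1) *
                  ∏ r ∈ Finset.Icc 2 T, θ r (seqAt hT s r) (seqAt hT s (r-1))) *
                Real.exp (-η * ∑ r ∈ Finset.Icc 1 (t-1), ℓ (xe (seqAt hT s r) r) (y r)))⁻¹ •
            ∑ s : Fin T → Fin M,
              ((θ1 (seqAt hT s 1) *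
                  ∏ r ∈ Finset.Icc 2 T, θ r (seqAt hT s r) (seqAt hT s (r-1))) *
                Real.exp (-η * ∑ r ∈ Finset.Icc 1 (t-1), ℓ (xe (seqAt hT s r) r) (y r)))
                • xe (seqAt hT s t) t := by
  
  intro T hT t ht1 htT
  classical
  have hM0 : (M:ℝ) ≠ 0 := Nat.cast_ne_zero.mpr (by omega)
  set e : ℕ → Fin M → ℝ := fun r j => Real.exp (-η * ℓ (xe j r) (y r)) with he
  set S : ℕ → ℝ := fun r => ∑ j, v r j * e r j with hSdef
  set κ : ℕ → Fin T := fun r => ⟨(r-1) % T, Nat.mod_lt _ hT⟩ with hκdef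
  have hκval : ∀ r, r ≤ T → ((κ r : ℕ)) = r - 1 := by
    intro r hr; simp only [hκdef]; exact Nat.mod_eq_of_lt (by omega)
  have hκne : ∀ a b, a ≤ T → b ≤ T → 1 ≤ a → 1 ≤ b → a ≠ b → κ a ≠ κ b := by
    intro a b ha hb h1a h1b hne heq
    apply hne
    have h := congrArg Fin.val heq
    rw [hκval a ha, hκval b hb] at h
    omega
  have hseq : ∀ (s : Fin T → Fin M) r, seqAt hT s r = s (κ r) := fun s r => rfl
  -- restated update rule
  have hvupd' : ∀ u, 1 ≤ u → ∀ i, v (u+1) i = ∑ j, θ (u+1) i j * (v u j * e u j / S u) :=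
    fun u hu i => hvupd u hu i
  -- positivity of normalizer
  have Spos0 : ∀ u, (∀ i, 0 ≤ v u i) → (∑ i, v u i) = 1 → 0 < S u := by
    intro u hnn hsum
    obtain ⟨j, hj⟩ : ∃ j, 0 < v u j := by
      by_contra h; push_neg at h
      have h0 : ∑ i, v u i = 0 := Finset.sum_eq_zero fun i _ => le_antisymm (h i) (hnn i)
      rw [h0] at hsum; norm_num at hsum
    apply Finset.sum_pos' (fun i _ => mul_nonneg (hnn i) (Real.exp_pos _).le)
    exact ⟨j, Finset.mem_univ j, mul_pos hj (Real.exp_pos _)⟩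
  have vprop : ∀ u, 1 ≤ u → (∀ i, 0 ≤ v u i) ∧ (∑ i, v u i) = 1 := by
    intro u hu
    induction u, hu using Nat.le_induction with
    | base =>
      constructor
      · intro i; rw [hv1]; exact hθ1pos i
      · rw [Finset.sum_congr rfl fun i _ => hv1 i]; exact hθ1sum
    | succ u hu ih =>
      obtain ⟨hnn, hsum⟩ := ih
      have hSpos : 0 < S u := Spos0 u hnn hsum
      constructor
      · intro i; rw [hvupd' u hu i]
        apply Finset.sum_nonneg; intro j _
        exact mul_nonneg (hθpos (u+1) (by omega) i j)
          (div_nonneg (mul_nonneg (hnn j) (Real.exp_pos _).le) hSpos.le)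
      · rw [Finset.sum_congr rfl fun i (_ : i ∈ univ) => hvupd' u hu i, Finset.sum_comm]
        have hrow : ∀ j, ∑ i, θ (u+1) i j * (v u j * e u j / S u) = v u j * e u j / S u := by
          intro j; rw [← Finset.sum_mul, hθsum (u+1) (by omega) j, one_mul]
        rw [Finset.sum_congr rfl fun j _ => hrow j, ← Finset.sum_div]
        exact div_self (ne_of_gt hSpos)
  have Spos : ∀ u, 1 ≤ u → 0 < S u := fun u hu =>
    Spos0 u (vprop u hu).1 (vprop u hu).2
  have vrec : ∀ u, 1 ≤ u → ∀ i, S u * v (u+1) i = ∑ j, θ (u+1) i j * (v u j * e u j) := by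
    intro u hu i
    rw [hvupd' u hu i,
      Finset.sum_congr rfl fun j (_ : j ∈ univ) => (mul_div_assoc (θ (u+1) i j) _ _).symm,
      ← Finset.sum_div, mul_comm, div_mul_cancel₀ _ (ne_of_gt (Spos u hu))]
  -- prefix weight
  set Ft : ℕ → (ℕ → Fin M) → ℝ := fun u p =>
    θ1 (p 1) * ((∏ r ∈ Finset.Icc 2 u, θ r (p r) (p (r-1))) *
      ∏ r ∈ Finset.Icc 1 (u-1), e r (p r)) with hFt
  have Ft_congr : ∀ u (p p' : ℕ → Fin M), 1 ≤ u → (∀ r, 1 ≤ r → r ≤ u → p r = p' r) →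
      Ft u p = Ft u p' := by
    intro u p p' hu h
    have h1 : θ1 (p 1) = θ1 (p' 1) := by rw [h 1 le_rfl hu]
    have h2 : ∏ r ∈ Finset.Icc 2 u, θ r (p r) (p (r-1))
        = ∏ r ∈ Finset.Icc 2 u, θ r (p' r) (p' (r-1)) :=
      Finset.prod_congr rfl fun r hr => by
        simp only [Finset.mem_Icc] at hr
        rw [h r (by omega) hr.2, h (r-1) (by omega) (by omega)]
    have h3 : ∏ r ∈ Finset.Icc 1 (u-1), e r (p r)
        = ∏ r ∈ Finset.Icc 1 (u-1), e r (p' r) :=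
      Finset.prod_congr rfl fun r hr => by
        simp only [Finset.mem_Icc] at hr
        rw [h r hr.1 (by omega)]
    simp only [hFt]; rw [h1, h2, h3]
  -- Lemma A: forward recursion
  have lemA : ∀ u, 1 ≤ u → u ≤ T → ∀ g : Fin M → ℝ,
      ∑ s : Fin T → Fin M, Ft u (fun r => s (κ r)) * g (s (κ u))
        = (M:ℝ)^(T - u) * ((∏ r ∈ Finset.Icc 1 (u-1), S r) * ∑ i, v u i * g i) := by
    intro u hu
    induction u, hu using Nat.le_induction with
    | base =>
      intro _ g
      have hb : ∀ s : Fin T → Fin M, Ft 1 (fun r => s (κ r)) * g (s (κ 1))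
          = θ1 (s (κ 1)) * g (s (κ 1)) := by
        intro s
        simp only [hFt]
        rw [Finset.Icc_eq_empty (by omega), Finset.Icc_eq_empty (by omega)]
        simp
      have helim := aux_sum_eliminate (M := M) (κ 1)
        (fun _ i => θ1 i * g i) (fun s j i => rfl)
      rw [Finset.sum_const, Finset.card_univ, Fintype.card_fun, Fintype.card_fin,
        Fintype.card_fin, nsmul_eq_mul, Nat.cast_pow] at helim
      have hvg : ∑ i, θ1 i * g i = ∑ i, v 1 i * g i :=
        Finset.sum_congr rfl fun i _ => by rw [hv1 i]
      have hTT : T - 1 + 1 = T := by omega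
      apply mul_left_cancel₀ hM0
      calc (M:ℝ) * ∑ s : Fin T → Fin M, Ft 1 (fun r => s (κ r)) * g (s (κ 1))
          = (M:ℝ) * ∑ s : Fin T → Fin M, θ1 (s (κ 1)) * g (s (κ 1)) := by
            rw [Finset.sum_congr rfl fun s _ => hb s]
        _ = (M:ℝ)^T * ∑ i, θ1 i * g i := helim.symm
        _ = (M:ℝ) * ((M:ℝ)^(T-1) *
              ((∏ r ∈ Finset.Icc 1 (1-1), S r) * ∑ i, v 1 i * g i)) := by
            rw [Finset.Icc_eq_empty (by omega : ¬ (1:ℕ) ≤ 1 - 1), Finset.prod_empty, one_mul,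
              ← hvg, ← mul_assoc, ← pow_succ', hTT]
    | succ u hu ih =>
      intro hut g
      have huT : u ≤ T := by omega
      have hstep : ∀ p : ℕ → Fin M, Ft (u+1) p
          = Ft u p * (e u (p u) * θ (u+1) (p (u+1)) (p u)) := by
        intro p
        have i1 : Finset.Icc 2 (u+1) = insert (u+1) (Finset.Icc 2 u) := by
          ext x; simp only [Finset.mem_Icc, Finset.mem_insert]; omega
        have i2 : Finset.Icc 1 (u+1-1) = insert u (Finset.Icc 1 (u-1)) := by
          ext x; simp only [Finset.mem_Icc, Finset.mem_insert]; omega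
        simp only [hFt]
        rw [i1, i2, Finset.prod_insert (by simp only [Finset.mem_Icc]; omega),
          Finset.prod_insert (by simp only [Finset.mem_Icc]; omega), Nat.add_sub_cancel]
        ring
      set F : (Fin T → Fin M) → Fin M → ℝ := fun s i =>
        Ft u (fun r => s (κ r)) * (e u (s (κ u)) * θ (u+1) i (s (κ u))) * g i with hF
      have hFinv : ∀ (s : Fin T → Fin M) (j i : Fin M),
          F (Function.update s (κ (u+1)) j) i = F s i := by
        intro s j i
        have hup : ∀ r, 1 ≤ r → r ≤ u → Function.update s (κ (u+1)) j (κ r) = s (κ r) := by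
          intro r h1 h2
          exact Function.update_of_ne (hκne r (u+1) (by omega) hut h1 (by omega) (by omega)) _ _
        simp only [hF]
        rw [Ft_congr u _ _ hu hup, hup u hu le_rfl]
      have helim := aux_sum_eliminate (M := M) (κ (u+1)) F hFinv
      set h : Fin M → ℝ := fun k => e u k * ∑ i, θ (u+1) i k * g i with hh
      have hsum_i : ∀ s : Fin T → Fin M, ∑ i, F s i
          = Ft u (fun r => s (κ r)) * h (s (κ u)) := by
        intro s
        simp only [hF, hh]
        rw [Finset.mul_sum, Finset.mul_sum]
        exact Finset.sum_congr rfl fun i _ => by ring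
      have hvh : ∑ j, v u j * h j = S u * ∑ i, v (u+1) i * g i := by
        simp only [hh]
        calc ∑ j, v u j * (e u j * ∑ i, θ (u+1) i j * g i)
            = ∑ j, ∑ i, θ (u+1) i j * (v u j * e u j) * g i := by
              refine Finset.sum_congr rfl fun j _ => ?_
              rw [Finset.mul_sum, Finset.mul_sum]
              exact Finset.sum_congr rfl fun i _ => by ring
          _ = ∑ i, (∑ j, θ (u+1) i j * (v u j * e u j)) * g i := by
              rw [Finset.sum_comm]
              exact Finset.sum_congr rfl fun i _ => (Finset.sum_mul _ _ _).symm
          _ = ∑ i, S u * (v (u+1) i * g i) := by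
              refine Finset.sum_congr rfl fun i _ => ?_
              rw [← vrec u hu i]; ring
          _ = S u * ∑ i, v (u+1) i * g i := (Finset.mul_sum _ _ _).symm
      have hFs : ∀ s : Fin T → Fin M,
          Ft (u+1) (fun r => s (κ r)) * g (s (κ (u+1))) = F s (s (κ (u+1))) := by
        intro s
        rw [hstep (fun r => s (κ r))]
      have iprodS : Finset.Icc 1 (u+1-1) = insert u (Finset.Icc 1 (u-1)) := by
        ext x; simp only [Finset.mem_Icc, Finset.mem_insert]; omega
      apply mul_left_cancel₀ hM0
      calc (M:ℝ) * ∑ s : Fin T → Fin M, Ft (u+1) (fun r => s (κ r)) * g (s (κ (u+1)))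
          = (M:ℝ) * ∑ s : Fin T → Fin M, F s (s (κ (u+1))) := by
            rw [Finset.sum_congr rfl fun s _ => hFs s]
        _ = ∑ s : Fin T → Fin M, ∑ i, F s i := helim.symm
        _ = ∑ s : Fin T → Fin M, Ft u (fun r => s (κ r)) * h (s (κ u)) :=
            Finset.sum_congr rfl fun s _ => hsum_i s
        _ = (M:ℝ)^(T - u) * ((∏ r ∈ Finset.Icc 1 (u-1), S r) * ∑ j, v u j * h j) :=
            ih huT h
        _ = (M:ℝ)^(T - u) * ((∏ r ∈ Finset.Icc 1 (u-1), S r) *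
              (S u * ∑ i, v (u+1) i * g i)) := by rw [hvh]
        _ = (M:ℝ) * ((M:ℝ)^(T - (u+1)) *
              ((∏ r ∈ Finset.Icc 1 (u+1-1), S r) * ∑ i, v (u+1) i * g i)) := by
            rw [iprodS, Finset.prod_insert (by simp only [Finset.mem_Icc]; omega)]
            have hpow : T - u = (T - (u+1)) + 1 := by omega
            rw [hpow, pow_succ']
            ring
  -- Lemma B: tail elimination
  have lemB : ∀ g : Fin M → ℝ, ∀ w, t ≤ w → w ≤ T →
      (M:ℝ)^(w - t) * ∑ s : Fin T → Fin M,
          Ft t (fun r => s (κ r)) *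
            (∏ r ∈ Finset.Icc (t+1) w, θ r (s (κ r)) (s (κ (r-1)))) * g (s (κ t))
        = ∑ s : Fin T → Fin M, Ft t (fun r => s (κ r)) * g (s (κ t)) := by
    intro g w hw
    induction w, hw using Nat.le_induction with
    | base =>
      intro _
      rw [Nat.sub_self, pow_zero, one_mul]
      refine Finset.sum_congr rfl fun s _ => ?_
      rw [Finset.Icc_eq_empty (by omega), Finset.prod_empty, mul_one]
    | succ w hw ihw =>
      intro hwT
      have hwT' : w ≤ T := by omega
      set F : (Fin T → Fin M) → Fin M → ℝ := fun s i =>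
        Ft t (fun r => s (κ r)) *
          (∏ r ∈ Finset.Icc (t+1) w, θ r (s (κ r)) (s (κ (r-1)))) * g (s (κ t)) *
          θ (w+1) i (s (κ w)) with hF
      have hFinv : ∀ (s : Fin T → Fin M) (j i : Fin M),
          F (Function.update s (κ (w+1)) j) i = F s i := by
        intro s j i
        have hup : ∀ r, 1 ≤ r → r ≤ w → Function.update s (κ (w+1)) j (κ r) = s (κ r) := by
          intro r h1 h2
          exact Function.update_of_ne (hκne r (w+1) (by omega) hwT h1 (by omega) (by omega)) _ _
        have hprod : (∏ r ∈ Finset.Icc (t+1) w,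
              θ r (Function.update s (κ (w+1)) j (κ r))
                (Function.update s (κ (w+1)) j (κ (r-1))))
            = ∏ r ∈ Finset.Icc (t+1) w, θ r (s (κ r)) (s (κ (r-1))) :=
          Finset.prod_congr rfl fun r hr => by
            simp only [Finset.mem_Icc] at hr
            rw [hup r (by omega) hr.2, hup (r-1) (by omega) (by omega)]
        simp only [hF]
        rw [Ft_congr t _ _ ht1 (fun r h1 h2 => hup r h1 (by omega)),
          hup t ht1 hw, hup w (by omega) le_rfl, hprod]
      have helim := aux_sum_eliminate (M := M) (κ (w+1)) F hFinv
      have hsum_i : ∀ s : Fin T → Fin M, ∑ i, F s i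
          = Ft t (fun r => s (κ r)) *
              (∏ r ∈ Finset.Icc (t+1) w, θ r (s (κ r)) (s (κ (r-1)))) * g (s (κ t)) := by
        intro s
        simp only [hF]
        rw [← Finset.mul_sum, hθsum (w+1) (by omega) _, mul_one]
      have hFs : ∀ s : Fin T → Fin M,
          Ft t (fun r => s (κ r)) *
              (∏ r ∈ Finset.Icc (t+1) (w+1), θ r (s (κ r)) (s (κ (r-1)))) * g (s (κ t))
            = F s (s (κ (w+1))) := by
        intro s
        have i1 : Finset.Icc (t+1) (w+1) = insert (w+1) (Finset.Icc (t+1) w) := by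
          ext x; simp only [Finset.mem_Icc, Finset.mem_insert]; omega
        rw [i1, Finset.prod_insert (by simp only [Finset.mem_Icc]; omega)]
        simp only [hF, Nat.add_sub_cancel]
        ring
      have key : (M:ℝ) * ∑ s : Fin T → Fin M,
          Ft t (fun r => s (κ r)) *
            (∏ r ∈ Finset.Icc (t+1) (w+1), θ r (s (κ r)) (s (κ (r-1)))) * g (s (κ t))
          = ∑ s : Fin T → Fin M,
          Ft t (fun r => s (κ r)) *
            (∏ r ∈ Finset.Icc (t+1) w, θ r (s (κ r)) (s (κ (r-1)))) * g (s (κ t)) := by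
        rw [Finset.sum_congr rfl fun s _ => hFs s, ← helim,
          Finset.sum_congr rfl fun s (_ : s ∈ univ) => hsum_i s]
      have hpow : w + 1 - t = (w - t) + 1 := by omega
      rw [hpow, pow_succ, mul_assoc, key, ihw hwT']
  -- Master identity
  have master : ∀ g : Fin M → ℝ,
      ∑ s : Fin T → Fin M,
          Ft t (fun r => s (κ r)) *
            (∏ r ∈ Finset.Icc (t+1) T, θ r (s (κ r)) (s (κ (r-1)))) * g (s (κ t))
        = (∏ r ∈ Finset.Icc 1 (t-1), S r) * ∑ i, v t i * g i := by
    intro g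
    have h1 := lemB g T htT le_rfl
    have h2 := lemA t ht1 htT g
    have hMpow : ((M:ℝ)^(T - t)) ≠ 0 := pow_ne_zero _ hM0
    apply mul_left_cancel₀ hMpow
    rw [h1, h2]
  -- rewrite the statement's weights
  have hW : ∀ s : Fin T → Fin M,
      (θ1 (s (κ 1)) * ∏ r ∈ Finset.Icc 2 T, θ r (s (κ r)) (s (κ (r-1)))) *
        Real.exp (-η * ∑ r ∈ Finset.Icc 1 (t-1), ℓ (xe (s (κ r)) r) (y r))
      = Ft t (fun r => s (κ r)) *
          (∏ r ∈ Finset.Icc (t+1) T, θ r (s (κ r)) (s (κ (r-1)))) := by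
    intro s
    have hexp2 : Real.exp (-η * ∑ r ∈ Finset.Icc 1 (t-1), ℓ (xe (s (κ r)) r) (y r))
        = ∏ r ∈ Finset.Icc 1 (t-1), e r (s (κ r)) := by
      rw [Finset.mul_sum, Real.exp_sum]
    have e1 : Finset.Icc 2 T = Finset.Ioc 1 T := by
      ext x; simp only [Finset.mem_Icc, Finset.mem_Ioc]; omega
    have e2 : Finset.Icc 2 t = Finset.Ioc 1 t := by
      ext x; simp only [Finset.mem_Icc, Finset.mem_Ioc]; omega
    have e3 : Finset.Icc (t+1) T = Finset.Ioc t T := by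
      ext x; simp only [Finset.mem_Icc, Finset.mem_Ioc]; omega
    have hsplit : ∏ r ∈ Finset.Icc 2 T, θ r (s (κ r)) (s (κ (r-1)))
        = (∏ r ∈ Finset.Icc 2 t, θ r (s (κ r)) (s (κ (r-1)))) *
          ∏ r ∈ Finset.Icc (t+1) T, θ r (s (κ r)) (s (κ (r-1))) := by
      rw [e1, e2, e3, Finset.prod_Ioc_consecutive _ ht1 htT]
    rw [hexp2, hsplit]
    simp only [hFt]
    ring
  have Ppos : 0 < ∏ r ∈ Finset.Icc 1 (t-1), S r :=
    Finset.prod_pos fun r hr => Spos r (Finset.mem_Icc.mp hr).1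
  have hC : ∑ s : Fin T → Fin M,
      Ft t (fun r => s (κ r)) * (∏ r ∈ Finset.Icc (t+1) T, θ r (s (κ r)) (s (κ (r-1))))
      = ∏ r ∈ Finset.Icc 1 (t-1), S r := by
    have h := master (fun _ => (1:ℝ))
    simpa [(vprop t ht1).2] using h
  have hvec : ∑ s : Fin T → Fin M,
      (Ft t (fun r => s (κ r)) *
        (∏ r ∈ Finset.Icc (t+1) T, θ r (s (κ r)) (s (κ (r-1))))) • xe (s (κ t)) t
      = ∑ i, ((∏ r ∈ Finset.Icc 1 (t-1), S r) * v t i) • xe i t := by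
    have h1 : ∀ s : Fin T → Fin M,
        (Ft t (fun r => s (κ r)) *
          (∏ r ∈ Finset.Icc (t+1) T, θ r (s (κ r)) (s (κ (r-1))))) • xe (s (κ t)) t
        = ∑ i, (Ft t (fun r => s (κ r)) *
            (∏ r ∈ Finset.Icc (t+1) T, θ r (s (κ r)) (s (κ (r-1)))) *
            (if s (κ t) = i then 1 else 0)) • xe i t := by
      intro s
      rw [Finset.sum_eq_single (s (κ t))]
      · simp
      · intro b _ hb; simp [Ne.symm hb]
      · intro hb; exact absurd (Finset.mem_univ _) hb
    rw [Finset.sum_congr rfl fun s _ => h1 s, Finset.sum_comm]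
    refine Finset.sum_congr rfl fun i _ => ?_
    rw [← Finset.sum_smul]
    congr 1
    have h := master (fun k => if k = i then (1:ℝ) else 0)
    calc ∑ s : Fin T → Fin M,
        Ft t (fun r => s (κ r)) *
          (∏ r ∈ Finset.Icc (t+1) T, θ r (s (κ r)) (s (κ (r-1)))) *
          (if s (κ t) = i then 1 else 0)
        = (∏ r ∈ Finset.Icc 1 (t-1), S r) * ∑ k, v t k * (if k = i then (1:ℝ) else 0) := h
      _ = (∏ r ∈ Finset.Icc 1 (t-1), S r) * v t i := by
          congr 1
          simp [mul_ite, mul_one, mul_zero]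
  -- finish
  have hWs : ∀ s : Fin T → Fin M,
      ((θ1 (s (κ 1)) * ∏ r ∈ Finset.Icc 2 T, θ r (s (κ r)) (s (κ (r-1)))) *
        Real.exp (-η * ∑ r ∈ Finset.Icc 1 (t-1), ℓ (xe (s (κ r)) r) (y r))) • xe (s (κ t)) t
      = (Ft t (fun r => s (κ r)) *
          (∏ r ∈ Finset.Icc (t+1) T, θ r (s (κ r)) (s (κ (r-1))))) • xe (s (κ t)) t :=
    fun s => by rw [hW s]
  simp only [hseq]
  rw [Finset.sum_congr rfl fun s (_ : s ∈ univ) => hW s, hC,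
    Finset.sum_congr rfl fun s (_ : s ∈ univ) => hWs s]
  rw [hvec, Finset.smul_sum]
  refine Finset.sum_congr rfl fun i _ => ?_
  rw [smul_smul, ← mul_assoc, inv_mul_cancel₀ (ne_of_gt Ppos), one_mul]
end

section
/- The GrowingMarkovHedge algorithm with positive weights π and parameters (α_t)_{t≥2} ⊂ (0,1) achieves, for every T ≥ 1 and every admissible sequence of experts i^T = (i_1,…,i_T) with shifts at times σ = (σ_1,…,σ_k), the regret bound L_T − L_T(i^T) ≤ (1/η) [ Σ_{j=0}^k log( Π_{M_{σ_{j+1}−1}} / π_{i_{σ_j}} ) + Σ_{j=1}^{k_1} log(1/α_{σ^1_j}) + Σ_{2 ≤ t ≤ T, t ∉ σ} log(1/(1−α_t)) ], where σ^0 = (σ^0_1,…,σ^0_{k_0}) are the shifts to fresh experts, σ^1 = (σ^1_1,…,σ^1_{k_1}) are the shifts to incumbent experts, k = k_0 + k_1, Π_M = Σ_{i=1}^M π_i, σ_0 = 1 and σ_{k+1} = T + 1. -/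
open scoped Classical

/-- **GrowingMarkovHedge regret bound (Theorem 3).**
GrowingMarkovHedge with positive weights π and parameters (α_t) ⊂ (0,1) achieves, for
every T ≥ 1 and every admissible sequence of experts with shifts at times σ_1 < … < σ_k,
of which the shifts indexed by F are to fresh experts and the others to incumbent experts,
L_T − L_T(i^T) ≤ (1/η)[ Σ_{j=0}^k log(Π_{M_{σ_{j+1}−1}}/π_{i_{σ_j}})
  + Σ_{incumbent shifts} log(1/α_{σ_j}) + Σ_{2≤t≤T, t∉σ} log(1/(1−α_t)) ],
with σ_0 = 1 and σ_{k+1} = T+1, Π_M = Σ_{i=1}^M π_i. -/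
theorem growingMarkovHedge_regret
    {E : Type*} [AddCommGroup E] [Module ℝ E] {Y : Type*}
    (X : Set E) (ℓ : E → Y → ℝ) (η : ℝ) (hη : 0 < η)
    (hexp : ∀ (yy : Y) (N : ℕ), 1 ≤ N → ∀ xs : Fin N → E, (∀ i, xs i ∈ X) →
      ∀ vv : Fin N → ℝ, (∀ i, 0 ≤ vv i) → (∑ i, vv i) = 1 →
      ℓ (∑ i, vv i • xs i) yy ≤ -(1/η) * Real.log (∑ i, vv i * Real.exp (-η * ℓ (xs i) yy)))
    -- growing expert ensemble
    (M : ℕ → ℕ) (hMpos : ∀ t, 1 ≤ t → 1 ≤ M t) (hMmono : Monotone M)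
    (π : ℕ → ℝ) (hπpos : ∀ i, 1 ≤ i → 0 < π i)
    (α : ℕ → ℝ) (hα : ∀ t, 2 ≤ t → 0 < α t ∧ α t < 1)
    (xe : ℕ → ℕ → E) (hxe : ∀ i t, 1 ≤ t → 1 ≤ i → i ≤ M t → xe i t ∈ X)
    (y : ℕ → Y) (xl : ℕ → E)
    -- GrowingMarkovHedge weights
    (v : ℕ → ℕ → ℝ)
    (hv1 : ∀ i, 1 ≤ i → i ≤ M 1 → v 1 i = π i / ∑ j ∈ Finset.Icc 1 (M 1), π j)
    (hvupd : ∀ t, 1 ≤ t → ∀ i, 1 ≤ i → i ≤ M t →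
      v (t+1) i = (1 - α (t+1)) *
          ((∑ j ∈ Finset.Icc 1 (M t), π j) / ∑ j ∈ Finset.Icc 1 (M (t+1)), π j) *
          (v t i * Real.exp (-η * ℓ (xe i t) (y t)) /
            ∑ j ∈ Finset.Icc 1 (M t), v t j * Real.exp (-η * ℓ (xe j t) (y t)))
        + α (t+1) * π i / ∑ j ∈ Finset.Icc 1 (M (t+1)), π j)
    (hvnew : ∀ t, 1 ≤ t → ∀ i, M t + 1 ≤ i → i ≤ M (t+1) →
      v (t+1) i = π i / ∑ j ∈ Finset.Icc 1 (M (t+1)), π j)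
    -- GrowingMarkovHedge prediction
    (hxl : ∀ t, 1 ≤ t → xl t = ∑ i ∈ Finset.Icc 1 (M t), v t i • xe i t)
    -- horizon and admissible comparison sequence
    (T : ℕ) (hT : 1 ≤ T)
    (iseq : ℕ → ℕ)
    (hadm : ∀ t, 1 ≤ t → t ≤ T → 1 ≤ iseq t ∧ iseq t ≤ M t)
    -- shifts occur exactly at times σ_1 < … < σ_k, with conventions σ_0 = 1, σ_{k+1} = T+1
    (k : ℕ) (σ : ℕ → ℕ)
    (hσ0 : σ 0 = 1) (hσlast : σ (k+1) = T + 1)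
    (hσmono : ∀ j, j ≤ k → σ j < σ (j+1))
    (hshift : ∀ t, 2 ≤ t → t ≤ T →
      (iseq t ≠ iseq (t-1) ↔ ∃ j ∈ Finset.Icc 1 k, σ j = t))
    -- F ⊆ {1,…,k} indexes the shifts to fresh experts, its complement those to incumbents
    (F : Finset ℕ) (hF : F ⊆ Finset.Icc 1 k)
    (hfresh : ∀ j ∈ F, M (σ j - 1) + 1 ≤ iseq (σ j) ∧ iseq (σ j) ≤ M (σ j))
    (hincumbent : ∀ j ∈ Finset.Icc 1 k, j ∉ F → iseq (σ j) ≤ M (σ j - 1)) :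
    (∑ t ∈ Finset.Icc 1 T, ℓ (xl t) (y t))
        - (∑ t ∈ Finset.Icc 1 T, ℓ (xe (iseq t) t) (y t))
      ≤ (1/η) *
        (∑ j ∈ Finset.range (k+1),
            Real.log ((∑ i ∈ Finset.Icc 1 (M (σ (j+1) - 1)), π i) / π (iseq (σ j)))
          + ∑ j ∈ Finset.Icc 1 k \ F, Real.log (1 / α (σ j))
          + ∑ t ∈ (Finset.Icc 2 T).filter (fun t => ∀ j ∈ Finset.Icc 1 k, σ j ≠ t),
              Real.log (1 / (1 - α t))) := by

  -- ## Small reindexing helpers between `Fin N` sums and `Icc 1 N` sums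
  have hfin : ∀ (N : ℕ) (f : ℕ → ℝ), ∑ i : Fin N, f (1 + (i : ℕ)) = ∑ i ∈ Finset.Icc 1 N, f i := by
    intro N f
    rw [show Finset.Icc 1 N = Finset.Ico 1 (N + 1) by rw [Finset.Ico_add_one_right_eq_Icc],
      Finset.sum_Ico_eq_sum_range, ← Fin.sum_univ_eq_sum_range (fun i => f (1 + i))]
    simp
  have hfinE : ∀ (N : ℕ) (f : ℕ → E), ∑ i : Fin N, f (1 + (i : ℕ)) = ∑ i ∈ Finset.Icc 1 N, f i := by
    intro N f
    rw [show Finset.Icc 1 N = Finset.Ico 1 (N + 1) by rw [Finset.Ico_add_one_right_eq_Icc],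
      Finset.sum_Ico_eq_sum_range, ← Fin.sum_univ_eq_sum_range (fun i => f (1 + i))]
    simp
  -- ## Abbreviations
  obtain ⟨P, hP⟩ : ∃ P : ℕ → ℝ, ∀ t, P t = ∑ j ∈ Finset.Icc 1 (M t), π j := ⟨_, fun _ => rfl⟩
  simp only [← hP] at hv1 hvupd hvnew ⊢
  obtain ⟨m, hm⟩ : ∃ m : ℕ → ℝ,
      ∀ t, m t = ∑ j ∈ Finset.Icc 1 (M t), v t j * Real.exp (-η * ℓ (xe j t) (y t)) :=
    ⟨_, fun _ => rfl⟩
  simp only [← hm] at hvupd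
  have hPpos : ∀ t, 1 ≤ t → 0 < P t := by
    intro t ht
    rw [hP]
    refine Finset.sum_pos (fun i hi => hπpos i (Finset.mem_Icc.mp hi).1)
      ⟨M t, Finset.mem_Icc.mpr ⟨hMpos t ht, le_refl _⟩⟩
  -- ## Weights are positive and sum to one
  have hVS : ∀ t, 1 ≤ t →
      (∀ i ∈ Finset.Icc 1 (M t), 0 < v t i) ∧ ∑ i ∈ Finset.Icc 1 (M t), v t i = 1 := by
    intro t ht
    induction t, ht using Nat.le_induction with
    | base =>
      constructor
      · intro i hi
        obtain ⟨h1, h2⟩ := Finset.mem_Icc.mp hi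
        rw [hv1 i h1 h2]
        exact div_pos (hπpos i h1) (hPpos 1 le_rfl)
      · rw [Finset.sum_congr rfl
          (fun i hi => hv1 i (Finset.mem_Icc.mp hi).1 (Finset.mem_Icc.mp hi).2),
          ← Finset.sum_div, ← hP 1]
        exact div_self (hPpos 1 le_rfl).ne'
    | succ t ht ih =>
      have hmt : 0 < m t := by
        rw [hm]
        refine Finset.sum_pos (fun i hi => mul_pos (ih.1 i hi) (Real.exp_pos _))
          ⟨M t, Finset.mem_Icc.mpr ⟨hMpos t ht, le_refl _⟩⟩
      have hα' := hα (t + 1) (by omega)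
      have hMle : M t ≤ M (t + 1) := hMmono (Nat.le_succ t)
      have hPt : 0 < P t := hPpos t ht
      have hPt1 : 0 < P (t + 1) := hPpos (t + 1) (by omega)
      have hpos : ∀ i ∈ Finset.Icc 1 (M (t + 1)), 0 < v (t + 1) i := by
        intro i hi
        obtain ⟨h1, h2⟩ := Finset.mem_Icc.mp hi
        by_cases hc : i ≤ M t
        · rw [hvupd t ht i h1 hc]
          have t1 : 0 ≤ (1 - α (t + 1)) * (P t / P (t + 1)) *
              (v t i * Real.exp (-η * ℓ (xe i t) (y t)) / m t) := by
            apply mul_nonneg (mul_nonneg (by linarith [hα'.2]) (div_pos hPt hPt1).le)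
            exact (div_pos (mul_pos (ih.1 i (Finset.mem_Icc.mpr ⟨h1, hc⟩))
              (Real.exp_pos _)) hmt).le
          have t2 : 0 < α (t + 1) * π i / P (t + 1) :=
            div_pos (mul_pos hα'.1 (hπpos i h1)) hPt1
          linarith
        · rw [hvnew t ht i (by omega) h2]
          exact div_pos (hπpos i h1) hPt1
      refine ⟨hpos, ?_⟩
      have hIcc0 : ∀ n : ℕ, Finset.Icc 1 n = Finset.Ioc 0 n := fun n => Finset.Icc_add_one_left_eq_Ioc 0 n
      have hPsplit : P (t + 1) = P t + ∑ i ∈ Finset.Ioc (M t) (M (t + 1)), π i := by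
        rw [hP (t + 1), hP t, hIcc0, hIcc0,
          ← Finset.sum_Ioc_consecutive _ (Nat.zero_le (M t)) hMle]
      have hsum_old : ∑ i ∈ Finset.Icc 1 (M t), v (t + 1) i
          = (1 - α (t + 1)) * (P t / P (t + 1)) + α (t + 1) * (P t / P (t + 1)) := by
        rw [Finset.sum_congr rfl
          (fun i hi => hvupd t ht i (Finset.mem_Icc.mp hi).1 (Finset.mem_Icc.mp hi).2),
          Finset.sum_add_distrib]
        congr 1
        · rw [← Finset.mul_sum, ← Finset.sum_div, ← hm t, div_self hmt.ne', mul_one]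
        · rw [Finset.sum_congr rfl
            (fun i _ => show α (t + 1) * π i / P (t + 1) = (α (t + 1) / P (t + 1)) * π i by ring),
            ← Finset.mul_sum, ← hP t]
          ring
      have hsum_new : ∑ i ∈ Finset.Ioc (M t) (M (t + 1)), v (t + 1) i
          = (∑ i ∈ Finset.Ioc (M t) (M (t + 1)), π i) / P (t + 1) := by
        rw [Finset.sum_congr rfl (fun i hi => hvnew t ht i
            (by have := Finset.mem_Ioc.mp hi; omega) (Finset.mem_Ioc.mp hi).2), ← Finset.sum_div]
      rw [hIcc0, ← Finset.sum_Ioc_consecutive _ (Nat.zero_le (M t)) hMle, ← hIcc0 (M t),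
        hsum_old, hsum_new]
      have h2 : (0 : ℝ) < P t + ∑ i ∈ Finset.Ioc (M t) (M (t + 1)), π i := hPsplit ▸ hPt1
      rw [hPsplit]
      field_simp
      ring
  have hmpos : ∀ t, 1 ≤ t → 0 < m t := by
    intro t ht
    rw [hm]
    refine Finset.sum_pos (fun i hi => mul_pos ((hVS t ht).1 i hi) (Real.exp_pos _))
      ⟨M t, Finset.mem_Icc.mpr ⟨hMpos t ht, le_refl _⟩⟩
  -- ## Mix-loss bound via exp-concavity
  have hloss : ∀ t, 1 ≤ t → ℓ (xl t) (y t) ≤ -(1 / η) * Real.log (m t) := by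
    intro t ht
    have hN := hMpos t ht
    have key := hexp (y t) (M t) hN (fun i => xe (1 + (i : ℕ)) t)
      (fun i => hxe (1 + (i : ℕ)) t ht (Nat.le_add_right 1 _) (by have := i.isLt; omega))
      (fun i => v t (1 + (i : ℕ)))
      (fun i => ((hVS t ht).1 _ (Finset.mem_Icc.mpr
        ⟨Nat.le_add_right 1 _, by have := i.isLt; omega⟩)).le)
      (by
        have e : (∑ i : Fin (M t), v t (1 + (i : ℕ))) = ∑ i ∈ Finset.Icc 1 (M t), v t i :=
          hfin (M t) (fun i => v t i)
        rw [e]; exact (hVS t ht).2)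
    have eE : (∑ i : Fin (M t), v t (1 + (i : ℕ)) • xe (1 + (i : ℕ)) t)
        = ∑ i ∈ Finset.Icc 1 (M t), v t i • xe i t := hfinE (M t) (fun i => v t i • xe i t)
    have eexp : (∑ i : Fin (M t), v t (1 + (i : ℕ)) * Real.exp (-η * ℓ (xe (1 + (i : ℕ)) t) (y t)))
        = ∑ i ∈ Finset.Icc 1 (M t), v t i * Real.exp (-η * ℓ (xe i t) (y t)) :=
      hfin (M t) (fun i => v t i * Real.exp (-η * ℓ (xe i t) (y t)))
    rw [hxl t ht, ← eE, hm t, ← eexp]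
    exact key
  -- ## The potential differences A, B
  obtain ⟨A, hA⟩ : ∃ A : ℕ → ℝ, ∀ t,
      A t = Real.log (v t (iseq t) * Real.exp (-η * ℓ (xe (iseq t) t) (y t)) / m t) :=
    ⟨_, fun _ => rfl⟩
  obtain ⟨B, hB⟩ : ∃ B : ℕ → ℝ, ∀ t, B t = Real.log (v t (iseq t)) := ⟨_, fun _ => rfl⟩
  have hvposadm : ∀ t, 1 ≤ t → t ≤ T → 0 < v t (iseq t) := fun t h1 h2 =>
    (hVS t h1).1 _ (Finset.mem_Icc.mpr (hadm t h1 h2))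
  have hAB : ∀ t, 1 ≤ t → t ≤ T →
      ℓ (xl t) (y t) - ℓ (xe (iseq t) t) (y t) ≤ (1 / η) * (A t - B t) := by
    intro t h1 h2
    have hvpos := hvposadm t h1 h2
    have hdiff : A t - B t = -η * ℓ (xe (iseq t) t) (y t) - Real.log (m t) := by
      rw [hA, hB, Real.log_div (mul_pos hvpos (Real.exp_pos _)).ne' (hmpos t h1).ne',
        Real.log_mul hvpos.ne' (Real.exp_pos _).ne', Real.log_exp]
      ring
    have hl := hloss t h1
    rw [hdiff, show (1 / η) * (-η * ℓ (xe (iseq t) t) (y t) - Real.log (m t))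
        = -(1 / η) * Real.log (m t) - ℓ (xe (iseq t) t) (y t) by field_simp; ring]
    linarith
  have hAle : ∀ t, 1 ≤ t → t ≤ T → A t ≤ 0 := by
    intro t h1 h2
    have hvpos := hvposadm t h1 h2
    rw [hA]
    apply Real.log_nonpos
    · exact div_nonneg (mul_nonneg hvpos.le (Real.exp_pos _).le) (hmpos t h1).le
    · rw [div_le_one (hmpos t h1), hm t]
      exact Finset.single_le_sum
        (f := fun j => v t j * Real.exp (-η * ℓ (xe j t) (y t)))
        (fun i hi => mul_nonneg ((hVS t h1).1 i hi).le (Real.exp_pos _).le)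
        (Finset.mem_Icc.mpr (hadm t h1 h2))
  -- ## Abel-type rearrangement of the telescoping sum
  have hrearr : ∀ n, 1 ≤ n → ∑ t ∈ Finset.Icc 1 n, (A t - B t)
      = A n - B 1 + ∑ t ∈ Finset.Icc 2 n, (A (t - 1) - B t) := by
    intro n hn
    induction n, hn using Nat.le_induction with
    | base => simp
    | succ n hn ih =>
      rw [Finset.sum_Icc_succ_top (by omega : 1 ≤ n + 1), ih,
        Finset.sum_Icc_succ_top (by omega : 2 ≤ n + 1)]
      simp only [Nat.add_sub_cancel]
      ring
  -- ## basic facts about σ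
  have hσle : ∀ a b, a ≤ b → b ≤ k + 1 → σ a ≤ σ b := by
    intro a b hab hb
    induction b with
    | zero => have : a = 0 := by omega
              subst this; exact le_rfl
    | succ n ih =>
      rcases Nat.lt_or_ge a (n + 1) with h | h
      · exact le_trans (ih (by omega) (by omega)) (le_of_lt (hσmono n (by omega)))
      · have : a = n + 1 := by omega
        subst this; exact le_rfl
  have hσlt : ∀ a b, a < b → b ≤ k + 1 → σ a < σ b := by
    intro a b hab hb
    have h1 : σ a ≤ σ (b - 1) := hσle a (b - 1) (by omega) (by omega)
    have h2 := hσmono (b - 1) (by omega)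
    rw [show b - 1 + 1 = b by omega] at h2
    omega
  have hσ1 : ∀ j, j ≤ k + 1 → 1 ≤ σ j := by
    intro j hj
    rcases Nat.eq_zero_or_pos j with h | h
    · subst h; omega
    · have := hσlt 0 j h hj; omega
  have hσT : ∀ j, j ≤ k → σ j ≤ T := by
    intro j hj
    have := hσlt j (k + 1) (by omega) le_rfl
    omega
  have hσ2 : ∀ j, 1 ≤ j → j ≤ k → 2 ≤ σ j := by
    intro j h1 h2
    have := hσlt 0 j h1 (by omega)
    omega
  -- ## the shift times as a Finset
  have hShift_eq : (Finset.Icc 2 T).filter (fun t => ∃ j ∈ Finset.Icc 1 k, σ j = t)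
      = (Finset.Icc 1 k).image σ := by
    ext t
    simp only [Finset.mem_filter, Finset.mem_image, Finset.mem_Icc]
    constructor
    · rintro ⟨-, j, hj, rfl⟩
      exact ⟨j, hj, rfl⟩
    · rintro ⟨j, hj, rfl⟩
      exact ⟨⟨hσ2 j hj.1 hj.2, hσT j hj.2⟩, j, hj, rfl⟩
  have hσinj : ∀ a ∈ Finset.Icc 1 k, ∀ b ∈ Finset.Icc 1 k, σ a = σ b → a = b := by
    intro a ha b hb hab
    obtain ⟨-, hak⟩ := Finset.mem_Icc.mp ha
    obtain ⟨-, hbk⟩ := Finset.mem_Icc.mp hb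
    by_contra hne
    rcases Nat.lt_or_ge a b with h | h
    · exact absurd hab (Nat.ne_of_lt (hσlt a b h (by omega)))
    · exact absurd hab.symm (Nat.ne_of_lt (hσlt b a (by omega) (by omega)))
  -- ## decomposition of non-shift times into blocks
  have hNS_eq : (Finset.Icc 2 T).filter (fun t => ∀ j ∈ Finset.Icc 1 k, σ j ≠ t)
      = (Finset.range (k + 1)).biUnion (fun j => Finset.Icc (σ j + 1) (σ (j + 1) - 1)) := by
    ext t
    simp only [Finset.mem_filter, Finset.mem_biUnion, Finset.mem_Icc, Finset.mem_range]
    constructor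
    · rintro ⟨⟨ht2, htT⟩, hns⟩
      have h0mem : 0 ∈ (Finset.range (k + 1)).filter (fun j => σ j < t) := by
        simp only [Finset.mem_filter, Finset.mem_range]
        exact ⟨by omega, by omega⟩
      have hSne : ((Finset.range (k + 1)).filter (fun j => σ j < t)).Nonempty := ⟨0, h0mem⟩
      obtain ⟨j, hjS, hjmax⟩ : ∃ j, (j < k + 1 ∧ σ j < t) ∧
          ∀ i, i < k + 1 → σ i < t → i ≤ j := by
        refine ⟨((Finset.range (k + 1)).filter (fun j => σ j < t)).max' hSne, ?_, ?_⟩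
        · have h := Finset.max'_mem ((Finset.range (k + 1)).filter (fun j => σ j < t)) hSne
          simpa only [Finset.mem_filter, Finset.mem_range] using h
        · intro i h1 h2
          exact Finset.le_max' _ i (by
            simp only [Finset.mem_filter, Finset.mem_range]; exact ⟨h1, h2⟩)
      obtain ⟨hjk, hjt⟩ := hjS
      have hσj1 : 1 ≤ σ (j + 1) := hσ1 (j + 1) (by omega)
      refine ⟨j, by omega, by omega, ?_⟩
      by_contra hcon
      push_neg at hcon
      have hle : σ (j + 1) ≤ t := by omega
      rcases eq_or_lt_of_le hle with heq | hlt
      · rcases Nat.lt_or_ge (j + 1) (k + 1) with hjk1 | hjk1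
        · exact hns (j + 1) ⟨by omega, by omega⟩ heq
        · have hj1 : j + 1 = k + 1 := by omega
          rw [hj1, hσlast] at heq; omega
      · rcases Nat.lt_or_ge (j + 1) (k + 1) with hjk1 | hjk1
        · have := hjmax (j + 1) hjk1 hlt
          omega
        · have hj1 : j + 1 = k + 1 := by omega
          rw [hj1, hσlast] at hlt; omega
    · rintro ⟨j, hjk, hj1, hj2⟩
      have hlt' : σ j < σ (j + 1) := hσmono j (by omega)
      have hjT : σ (j + 1) ≤ T + 1 := by
        have := hσle (j + 1) (k + 1) (by omega) le_rfl
        omega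
      have hj01 : 1 ≤ σ j := hσ1 j (by omega)
      refine ⟨⟨by omega, by omega⟩, ?_⟩
      intro j' hj' heq
      obtain ⟨hj'1, hj'k⟩ := hj'
      rcases Nat.lt_or_ge j' (j + 1) with h | h
      · have : σ j' ≤ σ j := hσle j' j (by omega) (by omega)
        omega
      · have : σ (j + 1) ≤ σ j' := hσle (j + 1) j' h (by omega)
        omega
  have hdisjkey : ∀ a b, a < b → b < k + 1 →
      Disjoint (Finset.Icc (σ a + 1) (σ (a + 1) - 1)) (Finset.Icc (σ b + 1) (σ (b + 1) - 1)) := by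
    intro a b h hb
    apply Finset.disjoint_left.mpr
    intro x hxa hxb
    obtain ⟨h1, h2⟩ := Finset.mem_Icc.mp hxa
    obtain ⟨h3, h4⟩ := Finset.mem_Icc.mp hxb
    have hb1 : σ (a + 1) ≤ σ b := hσle (a + 1) b h (by omega)
    have hb2 : 1 ≤ σ (a + 1) := hσ1 (a + 1) (by omega)
    omega
  have hdisj : (↑(Finset.range (k + 1)) : Set ℕ).PairwiseDisjoint
      (fun j => Finset.Icc (σ j + 1) (σ (j + 1) - 1)) := by
    intro a ha b hb hab
    simp only [Finset.coe_range, Set.mem_Iio] at ha hb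
    rcases Nat.lt_or_ge a b with h | h
    · exact hdisjkey a b h hb
    · exact (hdisjkey b a (by omega) ha).symm
  -- ## telescoping over a block
  have htel : ∀ a b : ℕ, a ≤ b →
      ∑ t ∈ Finset.Icc (a + 1) b, (Real.log (P t) - Real.log (P (t - 1)))
        = Real.log (P b) - Real.log (P a) := by
    intro a b hab
    induction b, hab using Nat.le_induction with
    | base =>
      rw [Finset.Icc_eq_empty (by omega), Finset.sum_empty]
      ring
    | succ b hb ih =>
      rw [Finset.sum_Icc_succ_top (by omega : a + 1 ≤ b + 1), ih]
      simp only [Nat.add_sub_cancel]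
      ring
  -- ## per-step bound at shift times
  have hshiftstep : ∀ j ∈ Finset.Icc 1 k, A (σ j - 1) - B (σ j) ≤
      (Real.log (P (σ j)) - Real.log (π (iseq (σ j))))
        + (if j ∈ F then 0 else Real.log (1 / α (σ j))) := by
    intro j hj
    obtain ⟨hj1, hjk⟩ := Finset.mem_Icc.mp hj
    have ht2 : 2 ≤ σ j := hσ2 j hj1 hjk
    have htT : σ j ≤ T := hσT j hjk
    obtain ⟨s, hs⟩ : ∃ s, σ j = s + 1 := ⟨σ j - 1, by omega⟩
    have hs1 : 1 ≤ s := by omega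
    have hsT : s ≤ T := by omega
    have hAs : A (σ j - 1) ≤ 0 := by
      rw [hs, Nat.add_sub_cancel]
      exact hAle s hs1 (by omega)
    have hi1 : 1 ≤ iseq (σ j) := (hadm (σ j) (by omega) htT).1
    have hiM : iseq (σ j) ≤ M (σ j) := (hadm (σ j) (by omega) htT).2
    have hπi : 0 < π (iseq (σ j)) := hπpos _ hi1
    have hPσ : 0 < P (σ j) := hPpos (σ j) (by omega)
    by_cases hjF : j ∈ F
    · have hfr := hfresh j hjF
      rw [hs, Nat.add_sub_cancel] at hfr
      have hBv : v (σ j) (iseq (σ j)) = π (iseq (σ j)) / P (σ j) := by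
        rw [hs]
        exact hvnew s hs1 _ hfr.1 (by rw [← hs]; exact hiM)
      rw [hB, hBv, Real.log_div hπi.ne' hPσ.ne', if_pos hjF]
      linarith
    · have hinc := hincumbent j hj hjF
      have hα' := hα (σ j) (by omega)
      have hi1' : 1 ≤ iseq (s + 1) := by rw [← hs]; exact hi1
      have hinc' : iseq (s + 1) ≤ M s := by
        rw [hs, Nat.add_sub_cancel] at hinc; exact hinc
      have hvpos' : 0 < v s (iseq (s + 1)) :=
        (hVS s hs1).1 _ (Finset.mem_Icc.mpr ⟨hi1', hinc'⟩)
      have hPs : 0 < P s := hPpos s hs1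
      have hPs1 : 0 < P (s + 1) := hPpos (s + 1) (by omega)
      have hms : 0 < m s := hmpos s hs1
      have hα3 := hα (s + 1) (by omega)
      have hvlow : α (σ j) * π (iseq (σ j)) / P (σ j) ≤ v (σ j) (iseq (σ j)) := by
        rw [hs, hvupd s hs1 (iseq (s + 1)) hi1' hinc']
        have hfirst : 0 ≤ (1 - α (s + 1)) * (P s / P (s + 1)) *
            (v s (iseq (s + 1)) * Real.exp (-η * ℓ (xe (iseq (s + 1)) s) (y s)) / m s) := by
          apply mul_nonneg (mul_nonneg (by linarith [hα3.2]) (div_pos hPs hPs1).le)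
          exact (div_pos (mul_pos hvpos' (Real.exp_pos _)) hms).le
        linarith
      have hBge : Real.log (α (σ j)) + Real.log (π (iseq (σ j))) - Real.log (P (σ j))
          ≤ B (σ j) := by
        rw [hB, show Real.log (α (σ j)) + Real.log (π (iseq (σ j))) - Real.log (P (σ j))
            = Real.log (α (σ j) * π (iseq (σ j)) / P (σ j)) by
          rw [Real.log_div (mul_pos hα'.1 hπi).ne' hPσ.ne', Real.log_mul hα'.1.ne' hπi.ne']]
        exact Real.log_le_log (div_pos (mul_pos hα'.1 hπi) hPσ) hvlow
      rw [if_neg hjF, one_div, Real.log_inv]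
      linarith
  -- ## per-step bound at non-shift times
  have hnsstep : ∀ t, 2 ≤ t → t ≤ T → iseq t = iseq (t - 1) →
      A (t - 1) - B t ≤ Real.log (1 / (1 - α t))
        + (Real.log (P t) - Real.log (P (t - 1))) := by
    intro t ht2 htT hieq
    obtain ⟨s, rfl⟩ : ∃ s, t = s + 1 := ⟨t - 1, by omega⟩
    simp only [Nat.add_sub_cancel] at hieq ⊢
    have hs1 : 1 ≤ s := by omega
    have hsT : s ≤ T := by omega
    have hi := hadm s hs1 hsT
    have hα' := hα (s + 1) (by omega)
    have hms : 0 < m s := hmpos s hs1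
    have hvpos_s : 0 < v s (iseq s) := (hVS s hs1).1 _ (Finset.mem_Icc.mpr hi)
    have hPs : 0 < P s := hPpos s hs1
    have hPs1 : 0 < P (s + 1) := hPpos (s + 1) (by omega)
    have hwpos : 0 < v s (iseq s) * Real.exp (-η * ℓ (xe (iseq s) s) (y s)) / m s :=
      div_pos (mul_pos hvpos_s (Real.exp_pos _)) hms
    have h1α : (0 : ℝ) < 1 - α (s + 1) := by linarith [hα'.2]
    have hvlow : (1 - α (s + 1)) * (P s / P (s + 1)) *
        (v s (iseq s) * Real.exp (-η * ℓ (xe (iseq s) s) (y s)) / m s) ≤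
          v (s + 1) (iseq (s + 1)) := by
      rw [hieq, hvupd s hs1 (iseq s) hi.1 hi.2]
      have : 0 ≤ α (s + 1) * π (iseq s) / P (s + 1) :=
        (div_pos (mul_pos hα'.1 (hπpos _ hi.1)) hPs1).le
      linarith
    have hBge : Real.log (1 - α (s + 1)) + (Real.log (P s) - Real.log (P (s + 1))) + A s
        ≤ B (s + 1) := by
      rw [hB, hA]
      have hexpand : Real.log ((1 - α (s + 1)) * (P s / P (s + 1)) *
          (v s (iseq s) * Real.exp (-η * ℓ (xe (iseq s) s) (y s)) / m s))
          = Real.log (1 - α (s + 1)) + (Real.log (P s) - Real.log (P (s + 1)))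
            + Real.log (v s (iseq s) * Real.exp (-η * ℓ (xe (iseq s) s) (y s)) / m s) := by
        rw [Real.log_mul (mul_pos h1α (div_pos hPs hPs1)).ne' hwpos.ne',
          Real.log_mul h1α.ne' (div_pos hPs hPs1).ne', Real.log_div hPs.ne' hPs1.ne']
      rw [← hexpand]
      exact Real.log_le_log (mul_pos (mul_pos h1α (div_pos hPs hPs1)) hwpos) hvlow
    rw [one_div, Real.log_inv]
    have hAs : A s = Real.log (v s (iseq s) * Real.exp (-η * ℓ (xe (iseq s) s) (y s)) / m s) :=
      hA s
    linarith
  -- ## sum over shift times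
  have hSsum : ∑ t ∈ (Finset.Icc 2 T).filter (fun t => ∃ j ∈ Finset.Icc 1 k, σ j = t),
      (A (t - 1) - B t) = ∑ j ∈ Finset.Icc 1 k, (A (σ j - 1) - B (σ j)) := by
    rw [hShift_eq, Finset.sum_image hσinj]
  have hsplit2 : (∑ t ∈ Finset.Icc 2 T, (A (t - 1) - B t))
      = (∑ t ∈ (Finset.Icc 2 T).filter (fun t => ∃ j ∈ Finset.Icc 1 k, σ j = t),
          (A (t - 1) - B t))
        + ∑ t ∈ (Finset.Icc 2 T).filter (fun t => ∀ j ∈ Finset.Icc 1 k, σ j ≠ t),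
            (A (t - 1) - B t) := by
    rw [← Finset.sum_filter_add_sum_filter_not (Finset.Icc 2 T)
      (fun t => ∃ j ∈ Finset.Icc 1 k, σ j = t) (fun t => A (t - 1) - B t)]
    congr 1
    · refine Finset.sum_congr ?_ (fun _ _ => rfl)
      ext t
      simp only [Finset.mem_filter]
    · refine Finset.sum_congr ?_ (fun _ _ => rfl)
      ext t
      simp only [Finset.mem_filter, not_exists, not_and]
  have hitesum : ∑ j ∈ Finset.Icc 1 k \ F, Real.log (1 / α (σ j))
      = ∑ j ∈ Finset.Icc 1 k, (if j ∈ F then 0 else Real.log (1 / α (σ j))) := by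
    rw [Finset.sdiff_eq_filter, Finset.sum_filter]
    exact Finset.sum_congr rfl (fun j _ => by by_cases hj : j ∈ F <;> simp [hj])
  have hNsum_le : ∑ t ∈ (Finset.Icc 2 T).filter (fun t => ∀ j ∈ Finset.Icc 1 k, σ j ≠ t),
      (A (t - 1) - B t)
      ≤ ∑ t ∈ (Finset.Icc 2 T).filter (fun t => ∀ j ∈ Finset.Icc 1 k, σ j ≠ t),
          (Real.log (1 / (1 - α t)) + (Real.log (P t) - Real.log (P (t - 1)))) := by
    apply Finset.sum_le_sum
    intro t htmem
    simp only [Finset.mem_filter] at htmem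
    obtain ⟨htIcc, hns⟩ := htmem
    obtain ⟨ht2, htT⟩ := Finset.mem_Icc.mp htIcc
    have hnoshift : iseq t = iseq (t - 1) := by
      by_contra hne
      obtain ⟨j, hjm, hje⟩ := (hshift t ht2 htT).mp hne
      exact hns j hjm hje
    exact hnsstep t ht2 htT hnoshift
  have hgsum : ∑ t ∈ (Finset.Icc 2 T).filter (fun t => ∀ j ∈ Finset.Icc 1 k, σ j ≠ t),
      (Real.log (P t) - Real.log (P (t - 1)))
      = ∑ j ∈ Finset.range (k + 1), (Real.log (P (σ (j + 1) - 1)) - Real.log (P (σ j))) := by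
    rw [hNS_eq, Finset.sum_biUnion hdisj]
    apply Finset.sum_congr rfl
    intro j hj
    have hjk : j < k + 1 := Finset.mem_range.mp hj
    have hmono' := hσmono j (by omega)
    have hform : Real.log (P (σ (j + 1) - 1)) - Real.log (P (σ j))
        = Real.log (P (σ (j + 1) - 1)) - Real.log (P (σ j)) := rfl
    exact htel (σ j) (σ (j + 1) - 1) (by omega)
  -- ## sum over `range (k+1)` splits as value at 0 plus `Icc 1 k`
  have hrangesum : ∀ f : ℕ → ℝ,
      ∑ j ∈ Finset.range (k + 1), f j = f 0 + ∑ j ∈ Finset.Icc 1 k, f j := by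
    intro f
    have h1 : ∑ j ∈ Finset.Icc 1 k, f j = ∑ i ∈ Finset.range k, f (i + 1) := by
      rw [show Finset.Icc 1 k = Finset.Ico 1 (k + 1) from (Finset.Ico_add_one_right_eq_Icc 1 k).symm,
        Finset.sum_Ico_eq_sum_range]
      simp only [Nat.add_sub_cancel]
      exact Finset.sum_congr rfl (fun i _ => by rw [Nat.add_comm])
    rw [h1, Finset.sum_range_succ' f k, add_comm]
  have hB1 : B 1 = Real.log (π (iseq 1)) - Real.log (P 1) := by
    rw [hB, hv1 (iseq 1) (hadm 1 le_rfl hT).1 (hadm 1 le_rfl hT).2]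
    exact Real.log_div (hπpos _ (hadm 1 le_rfl hT).1).ne' (hPpos 1 le_rfl).ne'
  -- ## bracket rewriting
  have hbracket : (∑ j ∈ Finset.range (k + 1),
        Real.log (P (σ (j + 1) - 1) / π (iseq (σ j))))
      = ((Real.log (P 1) - Real.log (π (iseq 1)))
          + ∑ j ∈ Finset.Icc 1 k, (Real.log (P (σ j)) - Real.log (π (iseq (σ j)))))
        + ∑ j ∈ Finset.range (k + 1),
            (Real.log (P (σ (j + 1) - 1)) - Real.log (P (σ j))) := by
    have h1 : ∀ j ∈ Finset.range (k + 1),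
        Real.log (P (σ (j + 1) - 1) / π (iseq (σ j)))
          = (Real.log (P (σ j)) - Real.log (π (iseq (σ j))))
            + (Real.log (P (σ (j + 1) - 1)) - Real.log (P (σ j))) := by
      intro j hj
      have hjk : j ≤ k := by have := Finset.mem_range.mp hj; omega
      have hπ : 0 < π (iseq (σ j)) :=
        hπpos _ (hadm (σ j) (hσ1 j (by omega)) (hσT j hjk)).1
      have hPp : 0 < P (σ (j + 1) - 1) := by
        have h := hσmono j hjk
        have h2 := hσ1 j (by omega)
        exact hPpos _ (by omega)
      rw [Real.log_div hPp.ne' hπ.ne']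
      ring
    rw [Finset.sum_congr rfl h1, Finset.sum_add_distrib,
      hrangesum (fun j => Real.log (P (σ j)) - Real.log (π (iseq (σ j))))]
    simp only [hσ0]
  -- ## final assembly
  have hATle : A T ≤ 0 := hAle T hT le_rfl
  have hshift_sum_le : ∑ j ∈ Finset.Icc 1 k, (A (σ j - 1) - B (σ j))
      ≤ ∑ j ∈ Finset.Icc 1 k, ((Real.log (P (σ j)) - Real.log (π (iseq (σ j))))
          + (if j ∈ F then 0 else Real.log (1 / α (σ j)))) :=
    Finset.sum_le_sum hshiftstep
  have hshift_split : ∑ j ∈ Finset.Icc 1 k, ((Real.log (P (σ j)) - Real.log (π (iseq (σ j))))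
        + (if j ∈ F then 0 else Real.log (1 / α (σ j))))
      = (∑ j ∈ Finset.Icc 1 k, (Real.log (P (σ j)) - Real.log (π (iseq (σ j)))))
        + ∑ j ∈ Finset.Icc 1 k \ F, Real.log (1 / α (σ j)) := by
    rw [Finset.sum_add_distrib, hitesum]
  have hns_split : ∑ t ∈ (Finset.Icc 2 T).filter (fun t => ∀ j ∈ Finset.Icc 1 k, σ j ≠ t),
        (Real.log (1 / (1 - α t)) + (Real.log (P t) - Real.log (P (t - 1))))
      = (∑ t ∈ (Finset.Icc 2 T).filter (fun t => ∀ j ∈ Finset.Icc 1 k, σ j ≠ t),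
          Real.log (1 / (1 - α t)))
        + ∑ j ∈ Finset.range (k + 1),
            (Real.log (P (σ (j + 1) - 1)) - Real.log (P (σ j))) := by
    rw [Finset.sum_add_distrib, hgsum]
  have hS_le : ∑ t ∈ Finset.Icc 1 T, (A t - B t)
      ≤ (∑ j ∈ Finset.range (k + 1), Real.log (P (σ (j + 1) - 1) / π (iseq (σ j))))
        + (∑ j ∈ Finset.Icc 1 k \ F, Real.log (1 / α (σ j)))
        + ∑ t ∈ (Finset.Icc 2 T).filter (fun t => ∀ j ∈ Finset.Icc 1 k, σ j ≠ t),
            Real.log (1 / (1 - α t)) := by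
    rw [hrearr T hT, hsplit2, hSsum, hbracket, hB1]
    linarith [hshift_sum_le, hshift_split, hNsum_le, hns_split, hATle]
  calc (∑ t ∈ Finset.Icc 1 T, ℓ (xl t) (y t))
        - ∑ t ∈ Finset.Icc 1 T, ℓ (xe (iseq t) t) (y t)
      = ∑ t ∈ Finset.Icc 1 T, (ℓ (xl t) (y t) - ℓ (xe (iseq t) t) (y t)) := by
        rw [Finset.sum_sub_distrib]
    _ ≤ ∑ t ∈ Finset.Icc 1 T, (1 / η) * (A t - B t) := by
        apply Finset.sum_le_sum
        intro t htm
        obtain ⟨h1, h2⟩ := Finset.mem_Icc.mp htm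
        exact hAB t h1 h2
    _ = (1 / η) * ∑ t ∈ Finset.Icc 1 T, (A t - B t) := by rw [Finset.mul_sum]
    _ ≤ _ := by
        apply mul_le_mul_of_nonneg_left hS_le
        positivity
end
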